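/- arXiv:2602.09326 — 6 statements merged into one kernel-verified Lean document; each statement's English description precedes it below -/
import Mathlib

section
/- If the poset ([n], ⪯) is an ordered partition (B_1, ..., B_m), i.e., i ≺ j iff i ∈ B_r and j ∈ B_s with r < s, then the PASV distribution equals the weighted-Shapley distribution: for every linear extension π, p^{(⪯,λ)}(π) = ∏_{t=1}^n λ_{π_t} / (∑_{k ∈ max_⪯(S_t)} λ_k), where S_t = {π_1, ..., π_t}. In particular, the WSV formula defines a probability distribution on Π^⪯. -/
open Finset
open scoped Classical BigOperators

def IsLinExt {n : ℕ} (le : Fin n → Fin n → Prop) (π : Equiv.Perm (Fin n)) : Prop :=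
  ∀ i j : Fin n, le i j → i ≠ j → ((π.symm i : ℕ) < (π.symm j : ℕ))

def prefixSet {n : ℕ} (π : Equiv.Perm (Fin n)) (t : ℕ) : Finset (Fin n) :=
  Finset.univ.filter fun i => (π.symm i : ℕ) < t

noncomputable def maxSet {n : ℕ} (le : Fin n → Fin n → Prop) (S : Finset (Fin n)) :
    Finset (Fin n) :=
  S.filter fun i => ∀ j ∈ S, le i j → i = j

noncomputable def pasvW {n : ℕ} (le : Fin n → Fin n → Prop) (lam : Fin n → ℝ)
    (π : Equiv.Perm (Fin n)) : ℝ :=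
  ∏ t : Fin n,
    lam (π t) * (maxSet le (prefixSet π (t.1 + 1))).card /
      ∑ k ∈ maxSet le (prefixSet π (t.1 + 1)), lam k

noncomputable def pasvDist {n : ℕ} (le : Fin n → Fin n → Prop) (lam : Fin n → ℝ)
    (π : Equiv.Perm (Fin n)) : ℝ :=
  if IsLinExt le π then
    pasvW le lam π / ∑ σ ∈ Finset.univ.filter (fun σ => IsLinExt le σ), pasvW le lam σ
  else 0

def opLe {n m : ℕ} (blk : Fin n → Fin m) : Fin n → Fin n → Prop :=
  fun a b => a = b ∨ blk a < blk b

section AuxPASV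
open Finset
variable {n : ℕ}

noncomputable def Tf (f : Fin n → Finset (Fin n) → ℝ) : ℕ → Finset (Fin n) → ℝ
  | 0, _ => 1
  | k+1, C => ∑ a ∈ C, f a C * Tf f k (C.erase a)

lemma card_filter_val_lt (s : ℕ) (hs : s ≤ n) :
    #(univ.filter fun j : Fin n => (j : ℕ) < s) = s := by
  have h : (univ.filter fun j : Fin n => (j : ℕ) < s).map Fin.valEmbedding
      = Finset.range s := by
    ext x
    simp only [Finset.mem_map, Finset.mem_filter, Finset.mem_univ, true_and,
      Finset.mem_range, Fin.valEmbedding_apply]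
    constructor
    · rintro ⟨j, hj, rfl⟩; exact hj
    · intro hx; exact ⟨⟨x, lt_of_lt_of_le hx hs⟩, hx, rfl⟩
  rw [← Finset.card_map, h, Finset.card_range]

lemma card_prefixSet (π : Equiv.Perm (Fin n)) (s : ℕ) (hs : s ≤ n) :
    (prefixSet π s).card = s := by
  have key : (prefixSet π s).card = #(univ.filter fun j : Fin n => (j : ℕ) < s) := by
    apply Finset.card_bij (fun a _ => π.symm a)
    · intro a ha; simp only [prefixSet, mem_filter, mem_univ, true_and] at ha ⊢; exact ha
    · intro a _ b _ h; exact (π.symm.injective h)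
    · intro b hb
      simp only [mem_filter, mem_univ, true_and] at hb
      exact ⟨π b, by simp [prefixSet, hb], by simp⟩
  rw [key, card_filter_val_lt s hs]

lemma prefixSet_univ (π : Equiv.Perm (Fin n)) : prefixSet π n = univ := by
  ext i; simp [prefixSet, (π.symm i).isLt]

lemma prefixSet_erase (π : Equiv.Perm (Fin n)) (K : Fin n) :
    (prefixSet π ((K : ℕ) + 1)).erase (π K) = prefixSet π K := by
  ext i
  simp only [prefixSet, Finset.mem_erase, mem_filter, mem_univ, true_and]
  constructor
  · rintro ⟨hne, hlt⟩
    have : π.symm i ≠ K := fun h => hne (by rw [← h]; simp)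
    have : (π.symm i : ℕ) ≠ (K : ℕ) := fun h => this (Fin.ext h)
    omega
  · intro h
    refine ⟨fun he => ?_, by omega⟩
    rw [he] at h; simp at h

lemma prefixSet_mul_swap (π : Equiv.Perm (Fin n)) (j K : Fin n) (s : ℕ)
    (hj : (j : ℕ) < s) (hK : (K : ℕ) < s) :
    prefixSet (π * Equiv.swap j K) s = prefixSet π s := by
  ext i
  simp only [prefixSet, mem_filter, mem_univ, true_and, Equiv.Perm.mul_apply,
    mul_inv_rev, Equiv.Perm.coe_mul, Function.comp_apply]
  have : (π * Equiv.swap j K).symm i = (Equiv.swap j K) (π.symm i) := by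
    simp [Equiv.Perm.mul_def]
  rw [this]
  rcases eq_or_ne (π.symm i) j with h | h
  · rw [h, Equiv.swap_apply_left]; omega
  rcases eq_or_ne (π.symm i) K with h2 | h2
  · rw [h2, Equiv.swap_apply_right]; omega
  · rw [Equiv.swap_apply_of_ne_of_ne h h2]

lemma claimB (f : Fin n → Finset (Fin n) → ℝ) :
    ∀ k, k ≤ n →
    ∑ π : Equiv.Perm (Fin n),
        (∏ s ∈ univ.filter (fun s : Fin n => k ≤ (s : ℕ)),
            f (π s) (prefixSet π ((s : ℕ) + 1))) * Tf f k (prefixSet π k)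
      = (k.factorial : ℝ) *
          ∑ π : Equiv.Perm (Fin n), ∏ s : Fin n, f (π s) (prefixSet π ((s : ℕ) + 1)) := by
  intro k
  induction k with
  | zero =>
    intro _
    simp only [Tf, mul_one, Nat.factorial_zero, Nat.cast_one, one_mul]
    apply Finset.sum_congr rfl
    intro π _
    apply Finset.prod_congr _ (fun _ _ => rfl)
    apply Finset.filter_true_of_mem
    intro s _; exact Nat.zero_le _
  | succ k ih =>
    intro hk1
    have hk : k ≤ n := Nat.le_of_succ_le hk1
    have hkn : k < n := hk1
    set K : Fin n := ⟨k, hkn⟩ with hK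
    -- define abbreviations
    set Q : Finset (Fin n) := univ.filter (fun j : Fin n => (j : ℕ) < k + 1) with hQ
    have hcardQ : Q.card = k + 1 := card_filter_val_lt (k+1) hk1
    -- H π a : the summand
    have step1 : ∀ π : Equiv.Perm (Fin n),
        (∏ s ∈ univ.filter (fun s : Fin n => k + 1 ≤ (s : ℕ)),
            f (π s) (prefixSet π ((s : ℕ) + 1))) * Tf f (k+1) (prefixSet π (k+1))
        = ∑ j ∈ Q,
            (∏ s ∈ univ.filter (fun s : Fin n => k + 1 ≤ (s : ℕ)),
              f (π s) (prefixSet π ((s : ℕ) + 1))) *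
              (f (π j) (prefixSet π (k+1)) * Tf f k ((prefixSet π (k+1)).erase (π j))) := by
      intro π
      rw [show Tf f (k+1) (prefixSet π (k+1)) = ∑ a ∈ prefixSet π (k+1),
            f a (prefixSet π (k+1)) * Tf f k ((prefixSet π (k+1)).erase a) from rfl,
        Finset.mul_sum]
      apply Finset.sum_bij' (fun a _ => π.symm a) (fun j _ => π j)
      · intro a ha
        simp only [hQ, prefixSet, mem_filter, mem_univ, true_and] at ha ⊢; exact ha
      · intro j hj
        simp only [hQ, prefixSet, mem_filter, mem_univ, true_and] at hj ⊢; simpa using hj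
      · intro a _; simp
      · intro j _; simp
      · intro a _; simp
    -- rewrite the sum, swap, substitute
    calc ∑ π : Equiv.Perm (Fin n),
        (∏ s ∈ univ.filter (fun s : Fin n => k + 1 ≤ (s : ℕ)),
            f (π s) (prefixSet π ((s : ℕ) + 1))) * Tf f (k+1) (prefixSet π (k+1))
        = ∑ π : Equiv.Perm (Fin n), ∑ j ∈ Q,
            (∏ s ∈ univ.filter (fun s : Fin n => k + 1 ≤ (s : ℕ)),
              f (π s) (prefixSet π ((s : ℕ) + 1))) *
              (f (π j) (prefixSet π (k+1)) * Tf f k ((prefixSet π (k+1)).erase (π j))) := by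
          exact Finset.sum_congr rfl (fun π _ => step1 π)
      _ = ∑ j ∈ Q, ∑ π : Equiv.Perm (Fin n),
            (∏ s ∈ univ.filter (fun s : Fin n => k + 1 ≤ (s : ℕ)),
              f (π s) (prefixSet π ((s : ℕ) + 1))) *
              (f (π j) (prefixSet π (k+1)) * Tf f k ((prefixSet π (k+1)).erase (π j))) :=
          Finset.sum_comm
      _ = ∑ j ∈ Q, ∑ π : Equiv.Perm (Fin n),
            (∏ s ∈ univ.filter (fun s : Fin n => k + 1 ≤ (s : ℕ)),
              f (π s) (prefixSet π ((s : ℕ) + 1))) *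
              (f (π K) (prefixSet π (k+1)) * Tf f k ((prefixSet π (k+1)).erase (π K))) := by
          apply Finset.sum_congr rfl
          intro j hj
          have hjlt : (j : ℕ) < k + 1 := by
            simpa [hQ] using hj
          set c := Equiv.swap j K with hc
          have subst := Fintype.sum_bijective (fun σ : Equiv.Perm (Fin n) => σ * c)
            (Group.mulRight_bijective c)
            (fun σ => (∏ s ∈ univ.filter (fun s : Fin n => k + 1 ≤ (s : ℕ)),
              f ((σ * c) s) (prefixSet (σ * c) ((s : ℕ) + 1))) *
              (f ((σ * c) j) (prefixSet (σ * c) (k+1)) *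
                Tf f k ((prefixSet (σ * c) (k+1)).erase ((σ * c) j))))
            (fun π => (∏ s ∈ univ.filter (fun s : Fin n => k + 1 ≤ (s : ℕ)),
              f (π s) (prefixSet π ((s : ℕ) + 1))) *
              (f (π j) (prefixSet π (k+1)) * Tf f k ((prefixSet π (k+1)).erase (π j))))
            (fun σ => rfl)
          rw [← subst]
          apply Finset.sum_congr rfl
          intro σ _
          have hKlt : (K : ℕ) < k + 1 := by simp [hK]
          have hpre : ∀ s : ℕ, (j : ℕ) < s → (K : ℕ) < s →
              prefixSet (σ * c) s = prefixSet σ s := fun s h1 h2 =>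
            prefixSet_mul_swap σ j K s h1 h2
          have h1 : prefixSet (σ * c) (k+1) = prefixSet σ (k+1) := hpre _ hjlt hKlt
          have h2 : (σ * c) j = σ K := by
            simp [hc, Equiv.Perm.mul_apply, Equiv.swap_apply_left]
          have h3 : ∀ s : Fin n, k + 1 ≤ (s : ℕ) → (σ * c) s = σ s := by
            intro s hs
            have hsj : s ≠ j := by
              intro h; rw [h] at hs; omega
            have hsK : s ≠ K := by
              intro h; rw [h] at hs; simp [hK] at hs
            simp [hc, Equiv.Perm.mul_apply, Equiv.swap_apply_of_ne_of_ne hsj hsK]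
          rw [h1, h2]
          congr 1
          apply Finset.prod_congr rfl
          intro s hs
          have hs' : k + 1 ≤ (s : ℕ) := by simpa using hs
          rw [h3 s hs', hpre ((s : ℕ) + 1) (by omega) (by omega)]
      _ = (k + 1 : ℝ) * ∑ π : Equiv.Perm (Fin n),
            (∏ s ∈ univ.filter (fun s : Fin n => k ≤ (s : ℕ)),
              f (π s) (prefixSet π ((s : ℕ) + 1))) * Tf f k (prefixSet π k) := by
          rw [Finset.sum_const, hcardQ]
          rw [nsmul_eq_mul]
          push_cast
          congr 1
          apply Finset.sum_congr rfl
          intro π _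
          have herase : (prefixSet π (k+1)).erase (π K) = prefixSet π k := by
            have := prefixSet_erase π K
            simpa [hK] using this
          have hins : univ.filter (fun s : Fin n => k ≤ (s : ℕ))
              = insert K (univ.filter (fun s : Fin n => k + 1 ≤ (s : ℕ))) := by
            ext s
            simp only [mem_filter, mem_univ, true_and, Finset.mem_insert]
            constructor
            · intro h
              rcases eq_or_lt_of_le h with h' | h'
              · left; exact Fin.ext h'.symm
              · right; omega
            · rintro (rfl | h)
              · simp [hK]
              · omega
          have hKnot : K ∉ univ.filter (fun s : Fin n => k + 1 ≤ (s : ℕ)) := by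
            simp [hK]
          rw [herase, hins, Finset.prod_insert hKnot]
          have hpk1 : ((K : ℕ) + 1) = k + 1 := by simp [hK]
          rw [hpk1]
          ring
      _ = ((k+1).factorial : ℝ) *
          ∑ π : Equiv.Perm (Fin n), ∏ s : Fin n, f (π s) (prefixSet π ((s : ℕ) + 1)) := by
          rw [ih hk, Nat.factorial_succ]
          push_cast
          ring

lemma sum_perm_eq_Tf (f : Fin n → Finset (Fin n) → ℝ) :
    ∑ π : Equiv.Perm (Fin n), ∏ s : Fin n, f (π s) (prefixSet π ((s : ℕ) + 1))
      = Tf f n univ := by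
  have h := claimB f n le_rfl
  have hemp : (univ.filter (fun s : Fin n => n ≤ (s : ℕ))) = ∅ := by
    apply Finset.filter_false_of_mem
    intro s _
    exact not_le.mpr s.isLt
  rw [hemp] at h
  simp only [Finset.prod_empty, one_mul] at h
  have h2 : ∀ π : Equiv.Perm (Fin n), Tf f n (prefixSet π n) = Tf f n univ := by
    intro π; rw [prefixSet_univ]
  rw [Finset.sum_congr rfl (fun π _ => h2 π), Finset.sum_const] at h
  have hcard : Fintype.card (Equiv.Perm (Fin n)) = n.factorial := by
    rw [Fintype.card_perm, Fintype.card_fin]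
  rw [Finset.card_univ, hcard, nsmul_eq_mul] at h
  have hfac : (n.factorial : ℝ) ≠ 0 := Nat.cast_ne_zero.mpr (Nat.factorial_ne_zero n)
  have := mul_left_cancel₀ hfac h
  exact this.symm

variable {m : ℕ} (blk : Fin n → Fin m) (lam : Fin n → ℝ)

noncomputable def fblk : Fin n → Finset (Fin n) → ℝ := fun a C =>
  if a ∈ maxSet (opLe blk) C then lam a / ∑ k ∈ maxSet (opLe blk) C, lam k else 0

lemma maxSet_subset (C : Finset (Fin n)) : maxSet (opLe blk) C ⊆ C :=
  Finset.filter_subset _ _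

lemma maxSet_nonempty (C : Finset (Fin n)) (hC : C.Nonempty) :
    (maxSet (opLe blk) C).Nonempty := by
  obtain ⟨b, hb, hmax⟩ := C.exists_max_image blk hC
  refine ⟨b, ?_⟩
  simp only [maxSet, mem_filter]
  refine ⟨hb, ?_⟩
  intro j hj hle
  rcases hle with h | h
  · exact h
  · exact absurd h (not_lt.mpr (hmax j hj))

lemma Tf_fblk (hlam : ∀ i, 0 < lam i) :
    ∀ k (C : Finset (Fin n)), C.card = k → Tf (fblk blk lam) k C = 1 := by
  intro k
  induction k with
  | zero => intro C _; rfl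
  | succ k ih =>
    intro C hC
    have hCne : C.Nonempty := Finset.card_pos.mp (by omega)
    have hM := maxSet_nonempty blk C hCne
    have hS : (0:ℝ) < ∑ x ∈ maxSet (opLe blk) C, lam x :=
      Finset.sum_pos (fun i _ => hlam i) hM
    show (∑ a ∈ C, fblk blk lam a C * Tf (fblk blk lam) k (C.erase a)) = 1
    have h1 : ∀ a ∈ C, fblk blk lam a C * Tf (fblk blk lam) k (C.erase a)
        = fblk blk lam a C := by
      intro a ha
      rw [ih (C.erase a) (by rw [Finset.card_erase_of_mem ha, hC]; omega), mul_one]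
    rw [Finset.sum_congr rfl h1]
    have h2 : ∑ a ∈ C, fblk blk lam a C
        = ∑ a ∈ maxSet (opLe blk) C, lam a / ∑ x ∈ maxSet (opLe blk) C, lam x := by
      rw [← Finset.sum_filter_add_sum_filter_not C (fun a => a ∈ maxSet (opLe blk) C)]
      have e1 : C.filter (fun a => a ∈ maxSet (opLe blk) C) = maxSet (opLe blk) C := by
        apply Finset.Subset.antisymm
        · intro a ha; exact (Finset.mem_filter.mp ha).2
        · intro a ha; exact Finset.mem_filter.mpr ⟨maxSet_subset blk C ha, ha⟩
      rw [e1]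
      have e2 : ∑ a ∈ C.filter (fun a => ¬ a ∈ maxSet (opLe blk) C),
          fblk blk lam a C = 0 := by
        apply Finset.sum_eq_zero
        intro a ha
        have := (Finset.mem_filter.mp ha).2
        simp [fblk, this]
      rw [e2, add_zero]
      apply Finset.sum_congr rfl
      intro a ha
      simp [fblk, ha]
    rw [h2, ← Finset.sum_div, div_self (ne_of_gt hS)]

lemma linext_mem_maxSet {π : Equiv.Perm (Fin n)} (hπ : IsLinExt (opLe blk) π)
    (t : Fin n) : π t ∈ maxSet (opLe blk) (prefixSet π ((t : ℕ) + 1)) := by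
  have hmem : π t ∈ prefixSet π ((t : ℕ) + 1) := by
    simp [prefixSet]
  simp only [maxSet, mem_filter]
  refine ⟨hmem, ?_⟩
  intro j hj hle
  by_contra hne
  have := hπ (π t) j hle hne
  simp only [Equiv.symm_apply_apply] at this
  simp only [prefixSet, mem_filter, mem_univ, true_and] at hj
  omega

lemma linext_blk_le {π : Equiv.Perm (Fin n)} (hπ : IsLinExt (opLe blk) π)
    (t : Fin n) {j : Fin n} (hj : j ∈ prefixSet π ((t : ℕ) + 1)) :
    blk j ≤ blk (π t) := by
  by_contra h
  push_neg at h
  have hne : π t ≠ j := by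
    intro he; rw [he] at h; exact lt_irrefl _ h
  have := hπ (π t) j (Or.inr h) hne
  simp only [Equiv.symm_apply_apply] at this
  simp only [prefixSet, mem_filter, mem_univ, true_and] at hj
  omega

lemma linext_lb {π : Equiv.Perm (Fin n)} (hπ : IsLinExt (opLe blk) π) (t : Fin n) :
    #(univ.filter fun i => blk i < blk (π t)) ≤ (t : ℕ) := by
  have hsub : univ.filter (fun i => blk i < blk (π t)) ⊆ prefixSet π (t : ℕ) := by
    intro i hi
    simp only [mem_filter, mem_univ, true_and] at hi
    have hne : i ≠ π t := by
      intro he; rw [he] at hi; exact lt_irrefl _ hi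
    have := hπ i (π t) (Or.inr hi) hne
    simp only [Equiv.symm_apply_apply] at this
    simp only [prefixSet, mem_filter, mem_univ, true_and]
    exact this
  calc #(univ.filter fun i => blk i < blk (π t)) ≤ (prefixSet π (t : ℕ)).card :=
        Finset.card_le_card hsub
    _ = (t : ℕ) := card_prefixSet π _ (le_of_lt t.isLt)

lemma linext_ub {π : Equiv.Perm (Fin n)} (hπ : IsLinExt (opLe blk) π) (t : Fin n) :
    (t : ℕ) < #(univ.filter fun i => blk i ≤ blk (π t)) := by
  have hsub : prefixSet π ((t : ℕ) + 1) ⊆ univ.filter (fun i => blk i ≤ blk (π t)) := by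
    intro i hi
    simp only [mem_filter, mem_univ, true_and]
    exact linext_blk_le blk hπ t hi
  have := Finset.card_le_card hsub
  rw [card_prefixSet π _ t.isLt] at this
  omega

lemma linext_blk_eq {π σ : Equiv.Perm (Fin n)} (hπ : IsLinExt (opLe blk) π)
    (hσ : IsLinExt (opLe blk) σ) (t : Fin n) : blk (π t) = blk (σ t) := by
  rcases lt_trichotomy (blk (π t)) (blk (σ t)) with h | h | h
  · exfalso
    have h1 : #(univ.filter fun i => blk i ≤ blk (π t))
        ≤ #(univ.filter fun i => blk i < blk (σ t)) := by
      apply Finset.card_le_card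
      intro i hi
      simp only [mem_filter, mem_univ, true_and] at hi ⊢
      exact lt_of_le_of_lt hi h
    have h2 := linext_ub blk hπ t
    have h3 := linext_lb blk hσ t
    omega
  · exact h
  · exfalso
    have h1 : #(univ.filter fun i => blk i ≤ blk (σ t))
        ≤ #(univ.filter fun i => blk i < blk (π t)) := by
      apply Finset.card_le_card
      intro i hi
      simp only [mem_filter, mem_univ, true_and] at hi ⊢
      exact lt_of_le_of_lt hi h
    have h2 := linext_ub blk hσ t
    have h3 := linext_lb blk hπ t
    omega

lemma card_maxSet_linext {π : Equiv.Perm (Fin n)} (hπ : IsLinExt (opLe blk) π)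
    (t : Fin n) :
    (maxSet (opLe blk) (prefixSet π ((t : ℕ) + 1))).card
      = (t : ℕ) + 1 - #(univ.filter fun i => blk i < blk (π t)) := by
  set P := prefixSet π ((t : ℕ) + 1) with hP
  have stepA : maxSet (opLe blk) P = P.filter (fun i => ¬ blk i < blk (π t)) := by
    ext i
    simp only [maxSet, mem_filter]
    constructor
    · rintro ⟨hiP, hmax⟩
      refine ⟨hiP, ?_⟩
      intro hlt
      have hmem : π t ∈ P := by simp [hP, prefixSet]
      have := hmax (π t) hmem (Or.inr hlt)
      rw [this] at hlt
      exact lt_irrefl _ hlt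
    · rintro ⟨hiP, hnlt⟩
      refine ⟨hiP, ?_⟩
      intro j hj hle
      rcases hle with h | h
      · exact h
      · exfalso
        have := linext_blk_le blk hπ t hj
        exact hnlt (lt_of_lt_of_le h this)
  have stepB : P.filter (fun i => blk i < blk (π t))
      = univ.filter (fun i => blk i < blk (π t)) := by
    apply Finset.Subset.antisymm
    · intro i hi
      simp only [mem_filter, mem_univ, true_and] at hi ⊢
      exact hi.2
    · intro i hi
      simp only [mem_filter, mem_univ, true_and] at hi ⊢
      refine ⟨?_, hi⟩
      have hne : i ≠ π t := by
        intro he; rw [he] at hi; exact lt_irrefl _ hi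
      have := hπ i (π t) (Or.inr hi) hne
      simp only [Equiv.symm_apply_apply] at this
      simp [hP, prefixSet]
      omega
    -- done
  have hcardP : P.card = (t : ℕ) + 1 := card_prefixSet π _ t.isLt
  have key := Finset.card_filter_add_card_filter_not
    (s := P) (p := fun i => blk i < blk (π t))
  rw [stepA, ← stepB]
  omega


lemma sum_fblk_eq_one {m : ℕ} (blk : Fin n → Fin m) (lam : Fin n → ℝ)
    (hlam : ∀ i, 0 < lam i) :
    (∑ π ∈ Finset.univ.filter (fun σ => IsLinExt (opLe blk) σ),
        ∏ t : Fin n,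
          lam (π t) / ∑ k ∈ maxSet (opLe blk) (prefixSet π ((t : ℕ) + 1)), lam k) = 1 := by
  have hall : ∑ π : Equiv.Perm (Fin n),
      ∏ t : Fin n, fblk blk lam (π t) (prefixSet π ((t : ℕ) + 1)) = 1 := by
    rw [sum_perm_eq_Tf]
    exact Tf_fblk blk lam hlam n univ (by simp)
  rw [← hall,
    ← Finset.sum_filter_add_sum_filter_not Finset.univ (fun σ => IsLinExt (opLe blk) σ)
      (fun π => ∏ t : Fin n, fblk blk lam (π t) (prefixSet π ((t : ℕ) + 1)))]
  have hz : ∑ π ∈ univ.filter (fun σ => ¬ IsLinExt (opLe blk) σ),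
      ∏ t : Fin n, fblk blk lam (π t) (prefixSet π ((t : ℕ) + 1)) = 0 := by
    apply Finset.sum_eq_zero
    intro π hπ
    have hn : ¬ IsLinExt (opLe blk) π := (Finset.mem_filter.mp hπ).2
    simp only [IsLinExt, not_forall] at hn
    obtain ⟨i, j, hle, hne, hnlt⟩ := hn
    apply Finset.prod_eq_zero (Finset.mem_univ (π.symm i))
    have hpi : π (π.symm i) = i := by simp
    suffices h : i ∉ maxSet (opLe blk) (prefixSet π ((π.symm i : ℕ) + 1)) by
      simp [fblk, hpi, h]
    intro hmem
    simp only [maxSet, mem_filter] at hmem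
    have hjmem : j ∈ prefixSet π ((π.symm i : ℕ) + 1) := by
      simp only [prefixSet, mem_filter, mem_univ, true_and]
      omega
    exact hne (hmem.2 j hjmem hle)
  rw [hz, add_zero]
  apply Finset.sum_congr rfl
  intro π hπ
  have hlin := (Finset.mem_filter.mp hπ).2
  apply Finset.prod_congr rfl
  intro t _
  simp [fblk, linext_mem_maxSet blk hlin t]

end AuxPASV

theorem stmt1 {n m : ℕ} (blk : Fin n → Fin m) (hsurj : Function.Surjective blk)
    (lam : Fin n → ℝ) (hlam : ∀ i, 0 < lam i) :
    (∀ π : Equiv.Perm (Fin n), IsLinExt (opLe blk) π →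
        pasvDist (opLe blk) lam π =
          ∏ t : Fin n,
            lam (π t) / ∑ k ∈ maxSet (opLe blk) (prefixSet π (t.1 + 1)), lam k) ∧
    (∑ π ∈ Finset.univ.filter (fun σ => IsLinExt (opLe blk) σ),
        ∏ t : Fin n,
          lam (π t) / ∑ k ∈ maxSet (opLe blk) (prefixSet π (t.1 + 1)), lam k) = 1  := by
  classical
  constructor
  · intro π hπ
    set W : Equiv.Perm (Fin n) → ℝ := fun σ => ∏ t : Fin n,
      lam (σ t) / ∑ k ∈ maxSet (opLe blk) (prefixSet σ ((t : ℕ) + 1)), lam k with hW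
    set Cst : ℝ := ∏ t : Fin n,
      ((maxSet (opLe blk) (prefixSet π ((t : ℕ) + 1))).card : ℝ) with hCst
    have hcardeq : ∀ σ, IsLinExt (opLe blk) σ → ∀ t : Fin n,
        (maxSet (opLe blk) (prefixSet σ ((t : ℕ) + 1))).card
          = (maxSet (opLe blk) (prefixSet π ((t : ℕ) + 1))).card := by
      intro σ hσ t
      rw [card_maxSet_linext blk hσ t, card_maxSet_linext blk hπ t,
        linext_blk_eq blk hσ hπ t]
    have hpw : ∀ σ, IsLinExt (opLe blk) σ →
        pasvW (opLe blk) lam σ = Cst * W σ := by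
      intro σ hσ
      rw [hCst, hW]
      unfold pasvW
      rw [← Finset.prod_mul_distrib]
      apply Finset.prod_congr rfl
      intro t _
      rw [← hcardeq σ hσ t]
      ring
    have hone := sum_fblk_eq_one blk lam hlam
    have hsum : ∑ σ ∈ Finset.univ.filter (fun σ => IsLinExt (opLe blk) σ),
        pasvW (opLe blk) lam σ = Cst := by
      rw [Finset.sum_congr rfl
        (fun σ hσ => hpw σ (Finset.mem_filter.mp hσ).2), ← Finset.mul_sum]
      rw [show (∑ σ ∈ Finset.univ.filter (fun σ => IsLinExt (opLe blk) σ), W σ) = 1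
          from hone, mul_one]
    have hCne : Cst ≠ 0 := by
      rw [hCst]
      apply Finset.prod_ne_zero_iff.mpr
      intro t _
      have hpos : 0 < (maxSet (opLe blk) (prefixSet π ((t : ℕ) + 1))).card :=
        Finset.card_pos.mpr ⟨π t, linext_mem_maxSet blk hπ t⟩
      exact_mod_cast hpos.ne'
    unfold pasvDist
    rw [if_pos hπ, hsum, hpw π hπ, mul_div_assoc, mul_comm, div_mul_cancel₀ _ hCne]
  · exact sum_fblk_eq_one blk lam hlam
end

section
/- Adjacent-swap local ratio: let π be a linear extension of the poset ([n],⪯) and k ∈ [n−1] with π_k and π_{k+1} incomparable. Let π' be π with positions k and k+1 swapped (also a linear extension). Then p^{(⪯,λ)}(π') / p^{(⪯,λ)}(π) = [(∑_{i∈M_k} λ_i)/|M_k|] / [(∑_{j∈M'_k} λ_j)/|M'_k|], where M_k = max_⪯({π_1,...,π_k}) and M'_k = max_⪯({π_1,...,π_{k−1}, π_{k+1}}). -/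
open Finset
open scoped Classical BigOperators

lemma mem_maxSet_self {n : ℕ} (le : Fin n → Fin n → Prop) (π : Equiv.Perm (Fin n))
    (hπ : IsLinExt le π) (t : Fin n) :
    π t ∈ maxSet le (prefixSet π (t.1 + 1)) := by
  simp only [maxSet, prefixSet, Finset.mem_filter, Finset.mem_univ, true_and,
    Equiv.symm_apply_apply]
  refine ⟨Nat.lt_succ_self _, fun j hj hle => ?_⟩
  by_contra hne
  have := hπ _ _ hle hne
  simp only [Equiv.symm_apply_apply] at this
  omega

lemma factor_pos {n : ℕ} (le : Fin n → Fin n → Prop) (lam : Fin n → ℝ)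
    (hlam : ∀ i, 0 < lam i) (π : Equiv.Perm (Fin n)) (hπ : IsLinExt le π) (t : Fin n) :
    0 < lam (π t) * (maxSet le (prefixSet π (t.1 + 1))).card /
      ∑ k ∈ maxSet le (prefixSet π (t.1 + 1)), lam k := by
  have hne : (maxSet le (prefixSet π (t.1 + 1))).Nonempty := ⟨_, mem_maxSet_self le π hπ t⟩
  have hs : 0 < ∑ k ∈ maxSet le (prefixSet π (t.1 + 1)), lam k :=
    Finset.sum_pos (fun i _ => hlam i) hne
  have hc : (0:ℝ) < (maxSet le (prefixSet π (t.1 + 1))).card := by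
    exact_mod_cast Finset.card_pos.mpr hne
  exact div_pos (mul_pos (hlam _) hc) hs

lemma pasvW_pos {n : ℕ} (le : Fin n → Fin n → Prop) (lam : Fin n → ℝ)
    (hlam : ∀ i, 0 < lam i) (π : Equiv.Perm (Fin n)) (hπ : IsLinExt le π) :
    0 < pasvW le lam π :=
  Finset.prod_pos fun t _ => factor_pos le lam hlam π hπ t
-- swap fixes strict cut at m when m ≤ k or k+1 < m
lemma swap_lt_iff {n : ℕ} (k : ℕ) (hk : k + 1 < n) (m : ℕ) (hm : m ≤ k ∨ k + 1 < m)
    (x : Fin n) :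
    ((Equiv.swap (⟨k, Nat.lt_of_succ_lt hk⟩ : Fin n) ⟨k+1, hk⟩ x : Fin n) : ℕ) < m ↔ (x : ℕ) < m := by
  set a : Fin n := ⟨k, Nat.lt_of_succ_lt hk⟩
  set b : Fin n := ⟨k+1, hk⟩
  by_cases hxa : x = a
  · subst hxa; rw [Equiv.swap_apply_left]; show (k+1 < m ↔ k < m); omega
  by_cases hxb : x = b
  · subst hxb; rw [Equiv.swap_apply_right]; show (k < m ↔ k+1 < m); omega
  · rw [Equiv.swap_apply_of_ne_of_ne hxa hxb]

lemma prefixSet_swap_eq {n : ℕ} (k : ℕ) (hk : k + 1 < n) (π : Equiv.Perm (Fin n))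
    (m : ℕ) (hm : m ≤ k ∨ k + 1 < m) :
    prefixSet ((Equiv.swap (⟨k, Nat.lt_of_succ_lt hk⟩ : Fin n) ⟨k+1, hk⟩).trans π) m
      = prefixSet π m := by
  ext i
  simp only [prefixSet, Finset.mem_filter, Finset.mem_univ, true_and, Equiv.symm_trans_apply,
    Equiv.symm_swap]
  exact Finset.mem_filter.trans ((and_iff_right (Finset.mem_univ _)).trans (swap_lt_iff k hk m hm _))

lemma linExt_swap {n : ℕ} (le : Fin n → Fin n → Prop) (π : Equiv.Perm (Fin n))
    (hπ : IsLinExt le π) (k : ℕ) (hk : k + 1 < n)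
    (hinc : ¬ le (π ⟨k, Nat.lt_of_succ_lt hk⟩) (π ⟨k + 1, hk⟩)) :
    IsLinExt le ((Equiv.swap (⟨k, Nat.lt_of_succ_lt hk⟩ : Fin n) ⟨k+1, hk⟩).trans π) := by
  set a : Fin n := ⟨k, Nat.lt_of_succ_lt hk⟩
  set b : Fin n := ⟨k+1, hk⟩
  intro i j hij hne
  have h := hπ i j hij hne
  simp only [Equiv.symm_trans_apply, Equiv.symm_swap]
  set x := π.symm i with hx
  set y := π.symm j with hy
  by_cases hxa : x = a
  · have hi : i = π a := by rw [← hxa, hx, Equiv.apply_symm_apply]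
    by_cases hyb : y = b
    · exfalso; apply hinc
      have hj : π b = j := by rw [← hyb, hy, Equiv.apply_symm_apply]
      have hi' : π a = i := by rw [← hxa, hx, Equiv.apply_symm_apply]
      rw [hi', hj]; exact hij
    · have hya : y ≠ a := by intro h'; rw [hxa, h'] at h; omega
      rw [hxa, Equiv.swap_apply_left, Equiv.swap_apply_of_ne_of_ne hya hyb]
      have h1 : (y : ℕ) ≠ k + 1 := fun h' => hyb (Fin.ext h')
      have h2 : (k : ℕ) < y := by rw [hxa] at h; exact h
      show k + 1 < (y:ℕ); omega
  by_cases hxb : x = b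
  · have hya : y ≠ a := by intro h'; rw [hxb, h'] at h; exact (show ¬ (k + 1 < k) by omega) h
    have hyb : y ≠ b := by intro h'; rw [hxb, h'] at h; omega
    rw [hxb, Equiv.swap_apply_right, Equiv.swap_apply_of_ne_of_ne hya hyb]
    have : (k:ℕ) + 1 < y := by rw [hxb] at h; exact h
    show (k:ℕ) < y; omega
  · rw [Equiv.swap_apply_of_ne_of_ne hxa hxb]
    by_cases hya : y = a
    · rw [hya, Equiv.swap_apply_left]
      have : (x:ℕ) < k := by rw [hya] at h; exact h
      show (x:ℕ) < k + 1; omega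
    by_cases hyb : y = b
    · rw [hyb, Equiv.swap_apply_right]
      have h1 : (x:ℕ) < k + 1 := by rw [hyb] at h; exact h
      have h2 : (x:ℕ) ≠ k := fun h' => hxa (Fin.ext h')
      show (x:ℕ) < k; omega
    · rw [Equiv.swap_apply_of_ne_of_ne hya hyb]; exact h
theorem stmt3 {n : ℕ} (le : Fin n → Fin n → Prop) (hle : IsPartialOrder (Fin n) le)
    (lam : Fin n → ℝ) (hlam : ∀ i, 0 < lam i)
    (π : Equiv.Perm (Fin n)) (hπ : IsLinExt le π) (k : ℕ) (hk : k + 1 < n)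
    (hinc : ¬ le (π ⟨k, Nat.lt_of_succ_lt hk⟩) (π ⟨k + 1, hk⟩) ∧
            ¬ le (π ⟨k + 1, hk⟩) (π ⟨k, Nat.lt_of_succ_lt hk⟩))
    (π' : Equiv.Perm (Fin n))
    (hπ' : π' = (Equiv.swap (⟨k, Nat.lt_of_succ_lt hk⟩ : Fin n) ⟨k + 1, hk⟩).trans π) :
    pasvDist le lam π' / pasvDist le lam π =
      ((∑ i ∈ maxSet le (prefixSet π (k + 1)), lam i) /
          (maxSet le (prefixSet π (k + 1))).card) /
        ((∑ j ∈ maxSet le (prefixSet π' (k + 1)), lam j) /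
          (maxSet le (prefixSet π' (k + 1))).card) := by
  subst hπ'
  set a : Fin n := ⟨k, Nat.lt_of_succ_lt hk⟩ with ha
  set b : Fin n := ⟨k + 1, hk⟩ with hb
  set σ : Equiv.Perm (Fin n) := (Equiv.swap a b).trans π with hσ
  have hσlin : IsLinExt le σ := linExt_swap le π hπ k hk hinc.1
  have hWπ : 0 < pasvW le lam π := pasvW_pos le lam hlam π hπ
  have hWσ : 0 < pasvW le lam σ := pasvW_pos le lam hlam σ hσlin
  have hZpos : 0 < ∑ τ ∈ Finset.univ.filter (fun τ => IsLinExt le τ), pasvW le lam τ := by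
    refine Finset.sum_pos (fun τ hτ => ?_) ⟨π, by simp [hπ]⟩
    exact pasvW_pos le lam hlam τ (Finset.mem_filter.mp hτ).2
  have key : pasvDist le lam σ / pasvDist le lam π = pasvW le lam σ / pasvW le lam π := by
    rw [pasvDist, pasvDist, if_pos hσlin, if_pos hπ, div_div_div_comm,
      div_self hZpos.ne', div_one]
  rw [key]
  -- split off the lambda product
  set g : Equiv.Perm (Fin n) → Fin n → ℝ := fun τ t =>
    ((maxSet le (prefixSet τ (t.1 + 1))).card : ℝ) /
      ∑ k ∈ maxSet le (prefixSet τ (t.1 + 1)), lam k with hg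
  have hgpos : ∀ τ : Equiv.Perm (Fin n), IsLinExt le τ → ∀ t : Fin n, 0 < g τ t := by
    intro τ hτ t
    have hne : (maxSet le (prefixSet τ (t.1 + 1))).Nonempty := ⟨_, mem_maxSet_self le τ hτ t⟩
    exact div_pos (by exact_mod_cast Finset.card_pos.mpr hne)
      (Finset.sum_pos (fun i _ => hlam i) hne)
  have hW : ∀ τ : Equiv.Perm (Fin n),
      pasvW le lam τ = (∏ t : Fin n, lam (τ t)) * ∏ t : Fin n, g τ t := by
    intro τ
    rw [pasvW, ← Finset.prod_mul_distrib]
    exact Finset.prod_congr rfl fun t _ => mul_div_assoc _ _ _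
  have hlameq : (∏ t : Fin n, lam (σ t)) = ∏ t : Fin n, lam (π t) := by
    have := Equiv.prod_comp (Equiv.swap a b) (fun t => lam (π t))
    simpa [hσ, Equiv.trans_apply] using this
  have hLpos : 0 < ∏ t : Fin n, lam (π t) := Finset.prod_pos fun t _ => hlam _
  have hgeq : ∀ t ∈ Finset.univ.erase a, g σ t = g π t := by
    intro t ht
    have hta : t ≠ a := (Finset.mem_erase.mp ht).1
    have htk : t.1 ≠ k := fun h => hta (Fin.ext h)
    have hm : t.1 + 1 ≤ k ∨ k + 1 < t.1 + 1 := by omega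
    rw [hg]
    simp only
    rw [prefixSet_swap_eq k hk π (t.1 + 1) hm]
  have hPeq : (∏ t ∈ Finset.univ.erase a, g σ t) = ∏ t ∈ Finset.univ.erase a, g π t :=
    Finset.prod_congr rfl hgeq
  have hPpos : 0 < ∏ t ∈ Finset.univ.erase a, g π t :=
    Finset.prod_pos fun t _ => hgpos π hπ t
  have hsplit : ∀ τ : Equiv.Perm (Fin n), (∏ t : Fin n, g τ t)
      = g τ a * ∏ t ∈ Finset.univ.erase a, g τ t := by
    intro τ
    exact (Finset.mul_prod_erase Finset.univ (g τ) (Finset.mem_univ a)).symm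
  have hWratio : pasvW le lam σ / pasvW le lam π = g σ a / g π a := by
    rw [hW σ, hW π, hlameq, hsplit σ, hsplit π, hPeq]
    rw [mul_comm (g σ a) _, mul_comm (g π a) _, ← mul_assoc, ← mul_assoc]
    exact mul_div_mul_left _ _ (mul_pos hLpos hPpos).ne'
  rw [hWratio]
  -- final algebra
  have h1 : (maxSet le (prefixSet π (k + 1))).Nonempty := ⟨_, mem_maxSet_self le π hπ a⟩
  have h2 : (maxSet le (prefixSet σ (k + 1))).Nonempty := ⟨_, mem_maxSet_self le σ hσlin a⟩
  have hc1 : (0:ℝ) < (maxSet le (prefixSet π (k + 1))).card := by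
    exact_mod_cast Finset.card_pos.mpr h1
  have hc2 : (0:ℝ) < (maxSet le (prefixSet σ (k + 1))).card := by
    exact_mod_cast Finset.card_pos.mpr h2
  have hs1 : 0 < ∑ i ∈ maxSet le (prefixSet π (k + 1)), lam i :=
    Finset.sum_pos (fun i _ => hlam i) h1
  have hs2 : 0 < ∑ i ∈ maxSet le (prefixSet σ (k + 1)), lam i :=
    Finset.sum_pos (fun i _ => hlam i) h2
  show ((maxSet le (prefixSet σ (k + 1))).card : ℝ) / (∑ i ∈ maxSet le (prefixSet σ (k + 1)), lam i) /
      (((maxSet le (prefixSet π (k + 1))).card : ℝ) / ∑ i ∈ maxSet le (prefixSet π (k + 1)), lam i) = _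
  field_simp
end

section
/- Maximal support under precedence: let p be a distribution supported on linear extensions of poset ([n],⪯), T a feasible (downward closed) set, and u_T the elementary game u_T(S) = 1 if T ⊆ S, else 0. If i ∈ T is not a maximal element of T, then the random order value ψ_i(u_T) = E_{π∼p}[u_T(π^i ∪ {i}) − u_T(π^i)] = 0. -/
open Finset
open scoped Classical BigOperators

def before {n : ℕ} (π : Equiv.Perm (Fin n)) (i : Fin n) : Finset (Fin n) :=
  Finset.univ.filter fun j => (π.symm j : ℕ) < (π.symm i : ℕ)

noncomputable def rov {n : ℕ} (p : Equiv.Perm (Fin n) → ℝ) (U : Finset (Fin n) → ℝ)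
    (i : Fin n) : ℝ :=
  ∑ π : Equiv.Perm (Fin n), p π * (U (insert i (before π i)) - U (before π i))

/-! A player `i ∈ T` that is not maximal in `T` lies strictly below some `j ∈ T`. In every linear
extension `π`, the player `j` comes after `i`, so `T` is contained neither in `π^i` nor in
`π^i ∪ {i}`: the marginal contribution of `i` to `u_T` vanishes on the support of `p`. -/

lemma notMem_before_self {n : ℕ} (π : Equiv.Perm (Fin n)) (i : Fin n) : i ∉ before π i := by
  simp [before]

lemma exists_lt_of_notMem_maxSet {n : ℕ} {le : Fin n → Fin n → Prop} {T : Finset (Fin n)}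
    {i : Fin n} (hi : i ∈ T) (hnotmax : i ∉ maxSet le T) : ∃ j ∈ T, le i j ∧ i ≠ j := by
  simpa [maxSet, hi] using hnotmax

lemma notMem_insert_before_of_lt {n : ℕ} {le : Fin n → Fin n → Prop} {π : Equiv.Perm (Fin n)}
    (hπ : IsLinExt le π) {i j : Fin n} (hij : le i j) (hne : i ≠ j) :
    j ∉ insert i (before π i) := by
  have hlt := hπ i j hij hne
  simp only [mem_insert, before, mem_filter, mem_univ, true_and, not_or]
  exact ⟨Ne.symm hne, by omega⟩

lemma unanimity_marginal_eq_zero {n : ℕ} {le : Fin n → Fin n → Prop} {π : Equiv.Perm (Fin n)}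
    (hπ : IsLinExt le π) {T : Finset (Fin n)} {i : Fin n} (hi : i ∈ T)
    (hnotmax : i ∉ maxSet le T) :
    ((if T ⊆ insert i (before π i) then (1 : ℝ) else 0) -
      if T ⊆ before π i then (1 : ℝ) else 0) = 0 := by
  obtain ⟨j, hjT, hij, hne⟩ := exists_lt_of_notMem_maxSet hi hnotmax
  have hins : ¬ T ⊆ insert i (before π i) := fun hs =>
    notMem_insert_before_of_lt hπ hij hne (hs hjT)
  have hbef : ¬ T ⊆ before π i := fun hs => notMem_before_self π i (hs hi)
  simp [hins, hbef]

theorem stmt9_general {n : ℕ} (le : Fin n → Fin n → Prop)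
    (p : Equiv.Perm (Fin n) → ℝ)
    (hsupp : ∀ π, p π ≠ 0 → IsLinExt le π)
    (T : Finset (Fin n))
    (i : Fin n) (hi : i ∈ T) (hnotmax : i ∉ maxSet le T) :
    rov p (fun S => if T ⊆ S then (1 : ℝ) else 0) i = 0 := by
  refine sum_eq_zero fun π _ => ?_
  by_cases hpπ : p π = 0
  · simp [hpπ]
  · rw [unanimity_marginal_eq_zero (hsupp π hpπ) hi hnotmax, mul_zero]

theorem stmt9 {n : ℕ} (le : Fin n → Fin n → Prop) (hle : IsPartialOrder (Fin n) le)
    (p : Equiv.Perm (Fin n) → ℝ) (hp0 : ∀ π, 0 ≤ p π)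
    (hp1 : ∑ π : Equiv.Perm (Fin n), p π = 1)
    (hsupp : ∀ π, p π ≠ 0 → IsLinExt le π)
    (T : Finset (Fin n)) (hT : ∀ i ∈ T, ∀ j, le j i → j ∈ T)
    (i : Fin n) (hi : i ∈ T) (hnotmax : i ∉ maxSet le T) :
    rov p (fun S => if T ⊆ S then (1 : ℝ) else 0) i = 0 :=
  stmt9_general le p hsupp T i hi hnotmax
end

section
/- Limiting case for ordered partitions: suppose ⪯ is the ordered-partition order induced by blocks (B_1,...,B_m). Fix a block B and nonempty G ⊆ B. Set λ_i = λ̄ for all i ∈ G and hold λ_j fixed for j ∉ G. Let ⪯' be the refined ordered-partition order obtained by splitting B into consecutive layers (B\G, G). Then for any λ' agreeing with λ off G and constant on G, and any permutation π, lim_{λ̄ → ∞} p^{(⪯,λ)}(π) = p^{(⪯',λ')}(π)·𝟙[π ∈ Π^{⪯'}]. -/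
open Finset
open scoped Classical BigOperators

def refLe {n m : ℕ} (blk : Fin n → Fin m) (B : Fin m) (G : Finset (Fin n)) :
    Fin n → Fin n → Prop :=
  fun a b => a = b ∨ blk a < blk b ∨ (blk a = B ∧ blk b = B ∧ a ∉ G ∧ b ∈ G)


section Aux13

variable {n m : ℕ}

lemma mem_prefixSet {σ : Equiv.Perm (Fin n)} {t : ℕ} {i : Fin n} :
    i ∈ prefixSet σ t ↔ (σ.symm i : ℕ) < t := by
  simp [prefixSet]

lemma maxSet_subset_s13 (le : Fin n → Fin n → Prop) (S : Finset (Fin n)) :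
    maxSet le S ⊆ S := Finset.filter_subset _ _

lemma mem_maxSet {le : Fin n → Fin n → Prop} {S : Finset (Fin n)} {i : Fin n} :
    i ∈ maxSet le S ↔ i ∈ S ∧ ∀ j ∈ S, le i j → i = j := by
  simp [maxSet]

lemma self_mem_maxSet {le : Fin n → Fin n → Prop} {σ : Equiv.Perm (Fin n)}
    (h : IsLinExt le σ) (t : Fin n) :
    σ t ∈ maxSet le (prefixSet σ (t.1 + 1)) := by
  rw [mem_maxSet]
  constructor
  · rw [mem_prefixSet]; simp
  · intro j hj hle
    by_contra hne
    have := h (σ t) j hle hne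
    rw [mem_prefixSet] at hj
    simp at this
    omega

lemma linExt_of_ref {blk : Fin n → Fin m} {B : Fin m} {G : Finset (Fin n)}
    {σ : Equiv.Perm (Fin n)} (h : IsLinExt (refLe blk B G) σ) :
    IsLinExt (opLe blk) σ := by
  intro i j hij hne
  exact h i j (hij.elim Or.inl (fun h2 => Or.inr (Or.inl h2))) hne

end Aux13


section Struct13

variable {n m : ℕ} {blk : Fin n → Fin m} {B : Fin m} {G : Finset (Fin n)}
  {π : Equiv.Perm (Fin n)}

lemma blk_le_of_mem_prefix (h : IsLinExt (opLe blk) π) {t k : Fin n}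
    (hk : k ∈ prefixSet π (t.1 + 1)) : ¬ blk (π t) < blk k := by
  intro hlt
  have hne : π t ≠ k := fun he => by rw [he] at hlt; exact lt_irrefl _ hlt
  have := h (π t) k (Or.inr hlt) hne
  rw [mem_prefixSet] at hk
  simp at this; omega

lemma mem_max_of_blk_eq (h1 : IsLinExt (opLe blk) π) {t i : Fin n}
    (hiS : i ∈ prefixSet π (t.1 + 1)) (hib : blk i = blk (π t)) :
    i ∈ maxSet (opLe blk) (prefixSet π (t.1 + 1)) := by
  rw [mem_maxSet]
  refine ⟨hiS, ?_⟩
  rintro j hj (rfl | hlt)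
  · rfl
  · rw [hib] at hlt
    exact absurd hlt (blk_le_of_mem_prefix h1 hj)

lemma blk_eq_of_mem_max (h1 : IsLinExt (opLe blk) π) {t i : Fin n}
    (hi : i ∈ maxSet (opLe blk) (prefixSet π (t.1 + 1))) : blk i = blk (π t) := by
  rw [mem_maxSet] at hi
  obtain ⟨hiS, hmax⟩ := hi
  have h2' : ¬ blk (π t) < blk i := blk_le_of_mem_prefix h1 hiS
  have hπS : π t ∈ prefixSet π (t.1 + 1) := by rw [mem_prefixSet]; simp
  have h1' : ¬ blk i < blk (π t) := by
    intro hlt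
    have hne : i ≠ π t := fun he => by rw [he] at hlt; exact lt_irrefl _ hlt
    exact hne (hmax _ hπS (Or.inr hlt))
  exact le_antisymm (not_lt.mp h2') (not_lt.mp h1')

lemma maxInterG_empty (hGB : ∀ i ∈ G, blk i = B)
    (h2 : IsLinExt (refLe blk B G) π) {t : Fin n} (ht : π t ∉ G) :
    maxSet (opLe blk) (prefixSet π (t.1 + 1)) ∩ G = ∅ := by
  have h1 := linExt_of_ref h2
  rw [Finset.eq_empty_iff_forall_notMem]
  rintro j hj
  rw [Finset.mem_inter] at hj
  obtain ⟨hjM, hjG⟩ := hj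
  have hjB : blk j = B := hGB j hjG
  have hB : blk (π t) = B := by rw [← hjB, ← blk_eq_of_mem_max h1 hjM]
  have hne : π t ≠ j := fun he => ht (he ▸ hjG)
  have := h2 (π t) j (Or.inr (Or.inr ⟨hB, hjB, ht, hjG⟩)) hne
  have hjS := mem_prefixSet.mp (maxSet_subset_s13 _ _ hjM)
  simp at this; omega

lemma maxSet_Gstep (hGB : ∀ i ∈ G, blk i = B)
    (h1 : IsLinExt (opLe blk) π) {t : Fin n} (ht : π t ∈ G) :
    maxSet (opLe blk) (prefixSet π (t.1 + 1)) =
      (prefixSet π (t.1 + 1)).filter (fun i => blk i = B) := by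
  ext i
  rw [Finset.mem_filter]
  constructor
  · intro hi
    exact ⟨maxSet_subset_s13 _ _ hi, by rw [blk_eq_of_mem_max h1 hi, hGB _ ht]⟩
  · rintro ⟨hiS, hiB⟩
    exact mem_max_of_blk_eq h1 hiS (by rw [hiB, hGB _ ht])

lemma D_subset_prefix (hGB : ∀ i ∈ G, blk i = B)
    (h2 : IsLinExt (refLe blk B G) π) {t : Fin n} (ht : π t ∈ G) :
    (Finset.univ.filter fun i => blk i = B ∧ i ∉ G) ⊆ prefixSet π (t.1 + 1) := by
  intro i hi
  rw [Finset.mem_filter] at hi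
  obtain ⟨_, hiB, hiG⟩ := hi
  have hne : i ≠ π t := fun he => hiG (he ▸ ht)
  have := h2 i (π t) (Or.inr (Or.inr ⟨hiB, hGB _ ht, hiG, ht⟩)) hne
  rw [mem_prefixSet]
  simp at this ⊢; omega

lemma maxSet_Gstep_union (hGB : ∀ i ∈ G, blk i = B)
    (h2 : IsLinExt (refLe blk B G) π) {t : Fin n} (ht : π t ∈ G) :
    maxSet (opLe blk) (prefixSet π (t.1 + 1)) =
      (Finset.univ.filter fun i => blk i = B ∧ i ∉ G) ∪
        (G ∩ prefixSet π (t.1 + 1)) := by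
  rw [maxSet_Gstep hGB (linExt_of_ref h2) ht]
  ext i
  simp only [Finset.mem_filter, Finset.mem_union, Finset.mem_inter, Finset.mem_univ,
    true_and]
  constructor
  · rintro ⟨hiS, hiB⟩
    by_cases hiG : i ∈ G
    · exact Or.inr ⟨hiG, hiS⟩
    · exact Or.inl ⟨hiB, hiG⟩
  · rintro (⟨hiB, hiG⟩ | ⟨hiG, hiS⟩)
    · exact ⟨D_subset_prefix hGB h2 ht (by simp [hiB, hiG]), hiB⟩
    · exact ⟨hiS, hGB _ hiG⟩

lemma maxInterG_Gstep (hGB : ∀ i ∈ G, blk i = B)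
    (h1 : IsLinExt (opLe blk) π) {t : Fin n} (ht : π t ∈ G) :
    maxSet (opLe blk) (prefixSet π (t.1 + 1)) ∩ G = G ∩ prefixSet π (t.1 + 1) := by
  rw [maxSet_Gstep hGB h1 ht]
  ext i
  simp only [Finset.mem_inter, Finset.mem_filter]
  constructor
  · rintro ⟨⟨hiS, _⟩, hiG⟩; exact ⟨hiG, hiS⟩
  · rintro ⟨hiG, hiS⟩; exact ⟨⟨hiS, hGB _ hiG⟩, hiG⟩

lemma maxSet_ref_subset (S : Finset (Fin n)) :
    maxSet (refLe blk B G) S ⊆ maxSet (opLe blk) S := by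
  intro i hi
  rw [mem_maxSet] at hi ⊢
  exact ⟨hi.1, fun j hj hle =>
    hi.2 j hj (hle.elim Or.inl (fun h => Or.inr (Or.inl h)))⟩

lemma maxSet_ref_of_empty {S : Finset (Fin n)}
    (hE : maxSet (opLe blk) S ∩ G = ∅) :
    maxSet (refLe blk B G) S = maxSet (opLe blk) S := by
  refine Finset.Subset.antisymm (maxSet_ref_subset S) ?_
  intro i hi
  have hi' := hi
  rw [mem_maxSet] at hi ⊢
  obtain ⟨hiS, hmax⟩ := hi
  refine ⟨hiS, ?_⟩
  rintro j hj (rfl | hlt | ⟨hiB, hjB, hiG, hjG⟩)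
  · rfl
  · exact hmax j hj (Or.inr hlt)
  · exfalso
    have hjmax : j ∈ maxSet (opLe blk) S := by
      rw [mem_maxSet]
      refine ⟨hj, ?_⟩
      rintro k hk (rfl | hlt)
      · rfl
      · rw [hjB, ← hiB] at hlt
        have := hmax k hk (Or.inr hlt)
        rw [← this] at hlt
        exact absurd hlt (lt_irrefl _)
    have : j ∈ maxSet (opLe blk) S ∩ G := Finset.mem_inter.mpr ⟨hjmax, hjG⟩
    rw [hE] at this
    exact absurd this (Finset.notMem_empty j)

lemma maxSet_ref_Gstep (hGB : ∀ i ∈ G, blk i = B)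
    (h2 : IsLinExt (refLe blk B G) π) {t : Fin n} (ht : π t ∈ G) :
    maxSet (refLe blk B G) (prefixSet π (t.1 + 1)) = G ∩ prefixSet π (t.1 + 1) := by
  have h1 := linExt_of_ref h2
  ext j
  constructor
  · intro hj
    have hj1 := maxSet_ref_subset _ hj
    have hjB : blk j = B := by rw [blk_eq_of_mem_max h1 hj1, hGB _ ht]
    have hjS := maxSet_subset_s13 _ _ hj1
    rw [Finset.mem_inter]
    refine ⟨?_, hjS⟩
    by_contra hjG
    rw [mem_maxSet] at hj
    have hπS : π t ∈ prefixSet π (t.1 + 1) := by rw [mem_prefixSet]; simp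
    have := hj.2 (π t) hπS (Or.inr (Or.inr ⟨hjB, hGB _ ht, hjG, ht⟩))
    exact hjG (this ▸ ht)
  · intro hj
    rw [Finset.mem_inter] at hj
    obtain ⟨hjG, hjS⟩ := hj
    have hjmax1 : j ∈ maxSet (opLe blk) (prefixSet π (t.1 + 1)) :=
      mem_max_of_blk_eq h1 hjS (by rw [hGB _ hjG, hGB _ ht])
    rw [mem_maxSet] at hjmax1 ⊢
    refine ⟨hjS, ?_⟩
    rintro k hk (rfl | hlt | ⟨hjB', _, hjG', _⟩)
    · rfl
    · exact hjmax1.2 k hk (Or.inr hlt)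
    · exact absurd hjG hjG'

lemma exists_bad (h1 : IsLinExt (opLe blk) π) (h2 : ¬ IsLinExt (refLe blk B G) π) :
    ∃ t : Fin n, π t ∉ G ∧
      (maxSet (opLe blk) (prefixSet π (t.1 + 1)) ∩ G).Nonempty := by
  unfold IsLinExt at h2
  push_neg at h2
  obtain ⟨i, j, hle, hne, hpos⟩ := h2
  rcases hle with rfl | hlt | ⟨hiB, hjB, hiG, hjG⟩
  · exact absurd rfl hne
  · exact absurd (h1 i j (Or.inr hlt) hne) (by omega)
  · refine ⟨π.symm i, by simp [hiG], ⟨j, ?_⟩⟩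
    rw [Finset.mem_inter]
    have hjS : j ∈ prefixSet π ((π.symm i).1 + 1) := by
      rw [mem_prefixSet]; omega
    refine ⟨mem_max_of_blk_eq h1 hjS ?_, hjG⟩
    rw [Equiv.apply_symm_apply, hjB, hiB]

end Struct13


section Limit13

open Filter

variable {n m : ℕ}

noncomputable def limFactor (blk : Fin n → Fin m) (G : Finset (Fin n)) (lam : Fin n → ℝ)
    (σ : Equiv.Perm (Fin n)) (t : Fin n) : ℝ :=
  if σ t ∈ G then
    ((maxSet (opLe blk) (prefixSet σ (t.1 + 1))).card : ℝ) /
      (((maxSet (opLe blk) (prefixSet σ (t.1 + 1)) ∩ G).card : ℝ))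
  else if (maxSet (opLe blk) (prefixSet σ (t.1 + 1)) ∩ G).card = 0 then
    lam (σ t) * ((maxSet (opLe blk) (prefixSet σ (t.1 + 1))).card : ℝ) /
      ∑ k ∈ maxSet (opLe blk) (prefixSet σ (t.1 + 1)) \ G, lam k
  else 0

noncomputable def limW (blk : Fin n → Fin m) (G : Finset (Fin n)) (lam : Fin n → ℝ)
    (σ : Equiv.Perm (Fin n)) : ℝ :=
  ∏ t : Fin n, limFactor blk G lam σ t

lemma sum_lamx (G : Finset (Fin n)) (lam : Fin n → ℝ) (M : Finset (Fin n)) (x : ℝ) :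
    ∑ k ∈ M, (if k ∈ G then x else lam k) =
      ((M ∩ G).card : ℝ) * x + ∑ k ∈ M \ G, lam k := by
  have e1 : M.filter (fun k => k ∈ G) = M ∩ G := by ext k; simp
  have e2 : M.filter (fun k => ¬ k ∈ G) = M \ G := by
    ext k; simp [Finset.mem_sdiff]
  rw [← Finset.sum_filter_add_sum_filter_not M (fun k => k ∈ G)]
  congr 1
  · rw [Finset.sum_congr rfl (fun k hk => if_pos (Finset.mem_filter.mp hk).2),
      Finset.sum_const, nsmul_eq_mul, e1]
  · rw [Finset.sum_congr rfl (fun k hk => if_neg (Finset.mem_filter.mp hk).2), e2]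

lemma tendsto_factor {blk : Fin n → Fin m} {G : Finset (Fin n)} {lam : Fin n → ℝ}
    (hlam : ∀ j, 0 < lam j) {σ : Equiv.Perm (Fin n)}
    (h1 : IsLinExt (opLe blk) σ) (t : Fin n) :
    Tendsto (fun x : ℝ =>
        (if σ t ∈ G then x else lam (σ t)) *
          ((maxSet (opLe blk) (prefixSet σ (t.1 + 1))).card : ℝ) /
        ∑ k ∈ maxSet (opLe blk) (prefixSet σ (t.1 + 1)),
          (if k ∈ G then x else lam k))
      atTop (nhds (limFactor blk G lam σ t)) := by
  set M := maxSet (opLe blk) (prefixSet σ (t.1 + 1)) with hM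
  set a : ℝ := ((M ∩ G).card : ℝ) with ha
  set b : ℝ := ∑ k ∈ M \ G, lam k with hb
  set c : ℝ := (M.card : ℝ) with hc
  have hsum : ∀ x : ℝ, ∑ k ∈ M, (if k ∈ G then x else lam k) = a * x + b :=
    fun x => sum_lamx G lam M x
  have hb0 : 0 ≤ b := Finset.sum_nonneg (fun k _ => (hlam k).le)
  by_cases ht : σ t ∈ G
  · -- a ≥ 1
    have haM : σ t ∈ M ∩ G :=
      Finset.mem_inter.mpr ⟨self_mem_maxSet h1 t, ht⟩
    have ha1 : 0 < a := by
      rw [ha]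
      exact_mod_cast Finset.card_pos.mpr ⟨σ t, haM⟩
    have hlim : Tendsto (fun x : ℝ => c / (a + b * x⁻¹)) atTop (nhds (c / a)) := by
      have hden : Tendsto (fun x : ℝ => a + b * x⁻¹) atTop (nhds a) := by
        have := (tendsto_inv_atTop_zero (𝕜 := ℝ)).const_mul b
        rw [mul_zero] at this
        simpa using tendsto_const_nhds.add this
      exact tendsto_const_nhds.div hden ha1.ne'
    have heq : (fun x : ℝ =>
        (if σ t ∈ G then x else lam (σ t)) * c / ∑ k ∈ M, (if k ∈ G then x else lam k))
        =ᶠ[atTop] (fun x : ℝ => c / (a + b * x⁻¹)) := by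
      filter_upwards [eventually_gt_atTop (0 : ℝ)] with x hx
      rw [hsum, if_pos ht]
      have hd : (0 : ℝ) < a * x + b := by positivity
      have hd2 : (0 : ℝ) < a + b * x⁻¹ := by positivity
      rw [div_eq_div_iff hd.ne' hd2.ne']
      field_simp
    rw [limFactor, if_pos ht]
    exact hlim.congr' heq.symm
  · by_cases ha0 : (M ∩ G).card = 0
    · have haz : a = 0 := by rw [ha, ha0]; simp
      have heq : (fun x : ℝ =>
          (if σ t ∈ G then x else lam (σ t)) * c / ∑ k ∈ M, (if k ∈ G then x else lam k))
          = (fun _ : ℝ => lam (σ t) * c / b) := by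
        funext x
        rw [hsum, if_neg ht, haz, zero_mul, zero_add]
      rw [limFactor, if_neg ht, if_pos ha0, heq]
      exact tendsto_const_nhds
    · have ha1 : 0 < a := by
        rw [ha]
        exact_mod_cast Nat.pos_of_ne_zero ha0
      have hden : Tendsto (fun x : ℝ => a * x + b) atTop atTop :=
        tendsto_atTop_add_const_right _ b (Tendsto.const_mul_atTop ha1 tendsto_id)
      have hlim : Tendsto (fun x : ℝ => lam (σ t) * c / (a * x + b)) atTop (nhds 0) :=
        Tendsto.div_atTop tendsto_const_nhds hden
      have heq : (fun x : ℝ =>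
          (if σ t ∈ G then x else lam (σ t)) * c / ∑ k ∈ M, (if k ∈ G then x else lam k))
          = (fun x : ℝ => lam (σ t) * c / (a * x + b)) := by
        funext x
        rw [hsum, if_neg ht]
      rw [limFactor, if_neg ht, if_neg ha0, heq]
      exact hlim

lemma tendsto_pasvW {blk : Fin n → Fin m} {G : Finset (Fin n)} {lam : Fin n → ℝ}
    (hlam : ∀ j, 0 < lam j) {σ : Equiv.Perm (Fin n)}
    (h1 : IsLinExt (opLe blk) σ) :
    Tendsto (fun x : ℝ => pasvW (opLe blk) (fun j => if j ∈ G then x else lam j) σ)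
      atTop (nhds (limW blk G lam σ)) := by
  unfold pasvW limW
  exact tendsto_finset_prod _ (fun t _ => tendsto_factor hlam h1 t)

end Limit13


section Comb13

variable {n m : ℕ}

lemma prod_rank {α : Type*} [LinearOrder α] (h : ℕ → ℝ) (T : Finset α) :
    ∏ t ∈ T, h ((T.filter (fun s => s ≤ t)).card) =
      ∏ a ∈ Finset.range T.card, h (a + 1) := by
  suffices H : ∀ (k : ℕ) (T : Finset α), T.card = k →
      ∏ t ∈ T, h ((T.filter (fun s => s ≤ t)).card) =
        ∏ a ∈ Finset.range T.card, h (a + 1) from H T.card T rfl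
  intro k
  induction k with
  | zero =>
    intro T hk
    rw [Finset.card_eq_zero] at hk
    subst hk; simp
  | succ k ih =>
    intro T hk
    have hne : T.Nonempty := by
      rw [← Finset.card_pos, hk]; omega
    set M := T.max' hne with hMdef
    have hMT : M ∈ T := T.max'_mem hne
    have hcard : (T.erase M).card = k := by
      rw [Finset.card_erase_of_mem hMT, hk]
      omega
    have hfM : T.filter (fun s => s ≤ M) = T := by
      apply Finset.filter_true_of_mem
      intro s hs; exact T.le_max' s hs
    have hstep : ∀ t ∈ T.erase M,
        T.filter (fun s => s ≤ t) = (T.erase M).filter (fun s => s ≤ t) := by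
      intro t htT
      ext x
      simp only [Finset.mem_filter, Finset.mem_erase]
      constructor
      · rintro ⟨hxT, hxt⟩
        refine ⟨⟨?_, hxT⟩, hxt⟩
        rintro rfl
        rw [Finset.mem_erase] at htT
        exact htT.1 (le_antisymm (T.le_max' t htT.2) hxt)
      · rintro ⟨⟨_, hxT⟩, hxt⟩
        exact ⟨hxT, hxt⟩
    rw [← Finset.mul_prod_erase T _ hMT, hfM, hk,
      Finset.prod_congr rfl (fun t ht => by rw [hstep t ht]),
      ih (T.erase M) hcard, hcard, Finset.prod_range_succ, mul_comm]

lemma exists_linExt_ref (blk : Fin n → Fin m) (B : Fin m) (G : Finset (Fin n)) :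
    ∃ σ : Equiv.Perm (Fin n), IsLinExt (refLe blk B G) σ := by
  classical
  set f : Fin n → ℕ := fun i => 2 * (blk i).1 + (if i ∈ G then 1 else 0) with hf
  refine ⟨Tuple.sort f, ?_⟩
  intro i j hle hne
  have hmono := Tuple.monotone_sort f
  have hfij : f i < f j := by
    rcases hle with rfl | hlt | ⟨hiB, hjB, hiG, hjG⟩
    · exact absurd rfl hne
    · have : (blk i).1 < (blk j).1 := hlt
      simp only [hf]
      split <;> split <;> omega
    · simp only [hf, hiB, hjB, if_neg hiG, if_pos hjG]
      omega
  by_contra hcon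
  push_neg at hcon
  have hle' : (Tuple.sort f).symm j ≤ (Tuple.sort f).symm i := by
    rw [← Fin.val_fin_le]; omega
  have := hmono hle'
  simp only [Function.comp_apply, Equiv.apply_symm_apply] at this
  omega

lemma limW_eq_zero {blk : Fin n → Fin m} {B : Fin m} {G : Finset (Fin n)}
    {lam : Fin n → ℝ} {σ : Equiv.Perm (Fin n)}
    (h1 : IsLinExt (opLe blk) σ) (h2 : ¬ IsLinExt (refLe blk B G) σ) :
    limW blk G lam σ = 0 := by
  obtain ⟨t, ht, hne⟩ := exists_bad h1 h2
  apply Finset.prod_eq_zero (Finset.mem_univ t)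
  rw [limFactor, if_neg ht, if_neg]
  exact (Finset.card_pos.mpr hne).ne'

end Comb13


section Key13

variable {n m : ℕ} {blk : Fin n → Fin m} {B : Fin m} {G : Finset (Fin n)}
  {lam : Fin n → ℝ} {c' : ℝ} {σ : Equiv.Perm (Fin n)}

lemma factor_nonG (hGB : ∀ i ∈ G, blk i = B) (h2 : IsLinExt (refLe blk B G) σ)
    {t : Fin n} (ht : σ t ∉ G) :
    limFactor blk G lam σ t =
      (if σ t ∈ G then c' else lam (σ t)) *
          ((maxSet (refLe blk B G) (prefixSet σ (t.1 + 1))).card : ℝ) /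
        ∑ k ∈ maxSet (refLe blk B G) (prefixSet σ (t.1 + 1)),
          (if k ∈ G then c' else lam k) := by
  have hE := maxInterG_empty hGB h2 ht
  have hMeq := maxSet_ref_of_empty (B := B) hE
  have hdisj : Disjoint (maxSet (opLe blk) (prefixSet σ (t.1 + 1))) G :=
    Finset.disjoint_iff_inter_eq_empty.mpr hE
  rw [limFactor, if_neg ht, if_pos (by rw [hE]; simp), hMeq, if_neg ht,
    Finset.sdiff_eq_self_of_disjoint hdisj]
  congr 1
  apply Finset.sum_congr rfl
  intro k hk
  rw [if_neg]
  intro hkG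
  exact Finset.disjoint_left.mp hdisj hk hkG

lemma factor_G_ref (hGB : ∀ i ∈ G, blk i = B) (h2 : IsLinExt (refLe blk B G) σ)
    (hc' : 0 < c') {t : Fin n} (ht : σ t ∈ G) :
    (if σ t ∈ G then c' else lam (σ t)) *
          ((maxSet (refLe blk B G) (prefixSet σ (t.1 + 1))).card : ℝ) /
        ∑ k ∈ maxSet (refLe blk B G) (prefixSet σ (t.1 + 1)),
          (if k ∈ G then c' else lam k) = 1 := by
  rw [maxSet_ref_Gstep hGB h2 ht, if_pos ht]
  have hmem : σ t ∈ G ∩ prefixSet σ (t.1 + 1) := by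
    rw [Finset.mem_inter, mem_prefixSet]
    exact ⟨ht, by simp⟩
  have hpos : 0 < (G ∩ prefixSet σ (t.1 + 1)).card := Finset.card_pos.mpr ⟨_, hmem⟩
  rw [Finset.sum_congr rfl (fun k hk => if_pos (Finset.mem_inter.mp hk).1),
    Finset.sum_const, nsmul_eq_mul]
  rw [div_eq_one_iff_eq]
  · ring
  · positivity

lemma cardGS (σ : Equiv.Perm (Fin n)) (t : Fin n) :
    (G ∩ prefixSet σ (t.1 + 1)).card =
      (((Finset.univ.filter fun s => σ s ∈ G)).filter (fun s => s ≤ t)).card := by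
  apply Finset.card_bij (fun k _ => σ.symm k)
  · intro k hk
    rw [Finset.mem_inter, mem_prefixSet] at hk
    simp only [Finset.mem_filter, Finset.mem_univ, true_and, Equiv.apply_symm_apply]
    exact ⟨hk.1, by rw [Fin.le_def]; omega⟩
  · intro k1 h1 k2 h2 he
    exact σ.symm.injective he
  · intro s hs
    simp only [Finset.mem_filter, Finset.mem_univ, true_and] at hs
    refine ⟨σ s, ?_, by simp⟩
    rw [Finset.mem_inter, mem_prefixSet]
    refine ⟨hs.1, ?_⟩
    simp only [Equiv.symm_apply_apply]
    rw [Fin.le_def] at hs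
    omega

lemma factor_G_lim (hGB : ∀ i ∈ G, blk i = B) (h2 : IsLinExt (refLe blk B G) σ)
    {t : Fin n} (ht : σ t ∈ G) :
    limFactor blk G lam σ t =
      ((((Finset.univ.filter fun i => blk i = B ∧ i ∉ G).card +
          (G ∩ prefixSet σ (t.1 + 1)).card : ℕ) : ℝ)) /
        (((G ∩ prefixSet σ (t.1 + 1)).card : ℕ) : ℝ) := by
  have h1 := linExt_of_ref h2
  have hI := maxInterG_Gstep hGB h1 ht
  have hU := maxSet_Gstep_union hGB h2 ht
  have hdisj : Disjoint (Finset.univ.filter fun i => blk i = B ∧ i ∉ G)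
      (G ∩ prefixSet σ (t.1 + 1)) := by
    rw [Finset.disjoint_left]
    intro i hi hi'
    rw [Finset.mem_filter] at hi
    exact hi.2.2 (Finset.mem_inter.mp hi').1
  rw [limFactor, if_pos ht, hI, hU, Finset.card_union_of_disjoint hdisj]

lemma pasvW_pos_s13 {le : Fin n → Fin n → Prop} {lam' : Fin n → ℝ}
    (hl : ∀ j, 0 < lam' j) (h : IsLinExt le σ) : 0 < pasvW le lam' σ := by
  unfold pasvW
  apply Finset.prod_pos
  intro t _
  have hM := self_mem_maxSet h t
  apply div_pos
  · apply mul_pos (hl _)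
    exact_mod_cast Finset.card_pos.mpr ⟨σ t, hM⟩
  · exact Finset.sum_pos (fun k _ => hl k) ⟨σ t, hM⟩

lemma limW_eq_K_mul (hGB : ∀ i ∈ G, blk i = B) (hc' : 0 < c')
    (h2 : IsLinExt (refLe blk B G) σ) :
    limW blk G lam σ =
      (∏ a ∈ Finset.range G.card,
          ((((Finset.univ.filter fun i => blk i = B ∧ i ∉ G).card + (a + 1) : ℕ) : ℝ) /
            (((a + 1 : ℕ)) : ℝ))) *
        pasvW (refLe blk B G) (fun j => if j ∈ G then c' else lam j) σ := by
  classical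
  set d := (Finset.univ.filter fun i => blk i = B ∧ i ∉ G).card with hd
  set T := (Finset.univ : Finset (Fin n)).filter (fun s => σ s ∈ G) with hT
  have hTcard : T.card = G.card := by
    apply Finset.card_bij (fun s _ => σ s)
    · intro s hs
      rw [hT, Finset.mem_filter] at hs
      exact hs.2
    · intro s1 _ s2 _ he
      exact σ.injective he
    · intro k hk
      exact ⟨σ.symm k, by simp [hT, hk], by simp⟩
  have hsplit := Finset.prod_filter_mul_prod_filter_not (Finset.univ : Finset (Fin n))
    (fun s => σ s ∈ G) (limFactor blk G lam σ)
  have hsplit' := Finset.prod_filter_mul_prod_filter_not (Finset.univ : Finset (Fin n))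
    (fun s => σ s ∈ G)
    (fun t => (if σ t ∈ G then c' else lam (σ t)) *
          ((maxSet (refLe blk B G) (prefixSet σ (t.1 + 1))).card : ℝ) /
        ∑ k ∈ maxSet (refLe blk B G) (prefixSet σ (t.1 + 1)),
          (if k ∈ G then c' else lam k))
  have e1 : ∏ t ∈ T, limFactor blk G lam σ t =
      ∏ a ∈ Finset.range G.card, (((d + (a + 1) : ℕ) : ℝ) / (((a + 1 : ℕ)) : ℝ)) := by
    rw [← hTcard, ← prod_rank (fun a => ((d + a : ℕ) : ℝ) / ((a : ℕ) : ℝ)) T]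
    apply Finset.prod_congr rfl
    intro t ht
    rw [hT, Finset.mem_filter] at ht
    rw [factor_G_lim hGB h2 ht.2, cardGS σ t]
  have e2 : ∏ t ∈ Finset.univ.filter (fun s => ¬ σ s ∈ G), limFactor blk G lam σ t =
      ∏ t ∈ Finset.univ.filter (fun s => ¬ σ s ∈ G),
        ((if σ t ∈ G then c' else lam (σ t)) *
          ((maxSet (refLe blk B G) (prefixSet σ (t.1 + 1))).card : ℝ) /
        ∑ k ∈ maxSet (refLe blk B G) (prefixSet σ (t.1 + 1)),
          (if k ∈ G then c' else lam k)) := by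
    apply Finset.prod_congr rfl
    intro t ht
    rw [Finset.mem_filter] at ht
    exact factor_nonG hGB h2 ht.2
  have e3 : ∏ t ∈ T,
      ((if σ t ∈ G then c' else lam (σ t)) *
          ((maxSet (refLe blk B G) (prefixSet σ (t.1 + 1))).card : ℝ) /
        ∑ k ∈ maxSet (refLe blk B G) (prefixSet σ (t.1 + 1)),
          (if k ∈ G then c' else lam k)) = 1 := by
    apply Finset.prod_eq_one
    intro t ht
    rw [hT, Finset.mem_filter] at ht
    exact factor_G_ref hGB h2 hc' ht.2
  rw [limW, pasvW, ← hsplit, ← hsplit', e1, e2, e3, one_mul]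

end Key13

theorem stmt13 {n m : ℕ} (blk : Fin n → Fin m) (hsurj : Function.Surjective blk)
    (B : Fin m) (G : Finset (Fin n)) (hGne : G.Nonempty) (hGB : ∀ i ∈ G, blk i = B)
    (lam : Fin n → ℝ) (hlam : ∀ j, 0 < lam j)
    (c' : ℝ) (hc' : 0 < c') (π : Equiv.Perm (Fin n)) :
    Filter.Tendsto
      (fun x : ℝ => pasvDist (opLe blk) (fun j => if j ∈ G then x else lam j) π)
      Filter.atTop
      (nhds (pasvDist (refLe blk B G) (fun j => if j ∈ G then c' else lam j) π *
        (if IsLinExt (refLe blk B G) π then (1 : ℝ) else 0))) := by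
  classical
  by_cases h1 : IsLinExt (opLe blk) π
  · set d := (Finset.univ.filter fun i => blk i = B ∧ i ∉ G).card with hd
    set K : ℝ := ∏ a ∈ Finset.range G.card,
        (((d + (a + 1) : ℕ) : ℝ) / (((a + 1 : ℕ)) : ℝ)) with hK
    set Z' : ℝ := ∑ σ ∈ Finset.univ.filter (fun σ => IsLinExt (refLe blk B G) σ),
        pasvW (refLe blk B G) (fun j => if j ∈ G then c' else lam j) σ with hZ'def
    have hlampos : ∀ j, 0 < (if j ∈ G then c' else lam j) := by
      intro j; split
      · exact hc'
      · exact hlam j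
    have hK0 : 0 < K := by
      rw [hK]
      apply Finset.prod_pos
      intro a _
      apply div_pos
      · exact_mod_cast Nat.pos_of_ne_zero (by omega)
      · exact_mod_cast Nat.succ_pos a
    have hZ' : 0 < Z' := by
      obtain ⟨σ0, hσ0⟩ := exists_linExt_ref blk B G
      rw [hZ'def]
      apply Finset.sum_pos
      · intro σ hσ
        exact pasvW_pos_s13 hlampos (Finset.mem_filter.mp hσ).2
      · exact ⟨σ0, Finset.mem_filter.mpr ⟨Finset.mem_univ _, hσ0⟩⟩
    have hsub : Finset.univ.filter (fun σ : Equiv.Perm (Fin n) => IsLinExt (refLe blk B G) σ) ⊆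
        Finset.univ.filter (fun σ => IsLinExt (opLe blk) σ) := by
      intro σ hσ
      rw [Finset.mem_filter] at hσ ⊢
      exact ⟨hσ.1, linExt_of_ref hσ.2⟩
    have hval : ∑ σ ∈ Finset.univ.filter (fun σ => IsLinExt (opLe blk) σ),
        limW blk G lam σ = K * Z' := by
      rw [← Finset.sum_subset hsub]
      · rw [hZ'def, Finset.mul_sum]
        apply Finset.sum_congr rfl
        intro σ hσ
        rw [limW_eq_K_mul hGB hc' (Finset.mem_filter.mp hσ).2]
      · intro σ hσ1 hσ2
        apply limW_eq_zero (Finset.mem_filter.mp hσ1).2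
        intro h2'
        exact hσ2 (Finset.mem_filter.mpr ⟨Finset.mem_univ _, h2'⟩)
    have hZtend : Filter.Tendsto (fun x : ℝ =>
        ∑ σ ∈ Finset.univ.filter (fun σ => IsLinExt (opLe blk) σ),
          pasvW (opLe blk) (fun j => if j ∈ G then x else lam j) σ)
        Filter.atTop (nhds (K * Z')) := by
      rw [← hval]
      exact tendsto_finset_sum _ (fun σ hσ => tendsto_pasvW hlam (Finset.mem_filter.mp hσ).2)
    have hWtend := tendsto_pasvW (G := G) hlam h1 (σ := π)
    have hdiv : Filter.Tendsto (fun x : ℝ =>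
        pasvW (opLe blk) (fun j => if j ∈ G then x else lam j) π /
          ∑ σ ∈ Finset.univ.filter (fun σ => IsLinExt (opLe blk) σ),
            pasvW (opLe blk) (fun j => if j ∈ G then x else lam j) σ)
        Filter.atTop (nhds (limW blk G lam π / (K * Z'))) :=
      hWtend.div hZtend (mul_pos hK0 hZ').ne'
    have hfun : (fun x : ℝ => pasvDist (opLe blk) (fun j => if j ∈ G then x else lam j) π)
        = fun x : ℝ =>
          pasvW (opLe blk) (fun j => if j ∈ G then x else lam j) π /
            ∑ σ ∈ Finset.univ.filter (fun σ => IsLinExt (opLe blk) σ),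
              pasvW (opLe blk) (fun j => if j ∈ G then x else lam j) σ := by
      funext x
      rw [pasvDist, if_pos h1]
    rw [hfun]
    by_cases h2 : IsLinExt (refLe blk B G) π
    · rw [if_pos h2, mul_one, pasvDist, if_pos h2, ← hZ'def]
      have heq : limW blk G lam π / (K * Z') =
          pasvW (refLe blk B G) (fun j => if j ∈ G then c' else lam j) π / Z' := by
        rw [limW_eq_K_mul hGB hc' h2, ← hd, ← hK, mul_div_mul_left _ _ hK0.ne']
      rw [← heq]
      exact hdiv
    · rw [if_neg h2, mul_zero]
      have h0 : limW blk G lam π = 0 := limW_eq_zero h1 h2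
      rw [h0, zero_div] at hdiv
      exact hdiv
  · have h2 : ¬ IsLinExt (refLe blk B G) π := fun h => h1 (linExt_of_ref h)
    have hfun : (fun x : ℝ => pasvDist (opLe blk) (fun j => if j ∈ G then x else lam j) π)
        = fun _ : ℝ => (0 : ℝ) := by
      funext x
      rw [pasvDist, if_neg h1]
    rw [hfun, if_neg h2, mul_zero]
    exact tendsto_const_nhds
end

section
/- Uniqueness of PASV within the state-choice factorization family: suppose p(π) ∝ ∏_{t=1}^n s(S_t)·c_λ(π_t; S_t) on linear extensions, where s : feasible sets → ℝ_{>0} does not depend on λ, and for each feasible S the choice weights satisfy ∑_{i ∈ max_⪯(S)} c_λ(i;S) = 1. If additionally (Weight Proportionality) c_λ(i;S)/c_λ(j;S) = λ_i/λ_j for all i,j ∈ max_⪯(S), then necessarily c_λ(i;S) = λ_i / ∑_{k ∈ max_⪯(S)} λ_k; and if (Equal-Weight Uniformity) the induced distribution is uniform on Π^⪯ whenever λ is constant, then the resulting p equals the PASV distribution p^{(⪯,λ)}(π) ∝ ∏_{t=1}^n λ_{π_t}·|max_⪯(S_t)| / ∑_{k∈max_⪯(S_t)} λ_k. -/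
/- Weight proportionality pins each choice factor down to a multiple of `λ_i`, and normalization
fixes the multiple, so `c_λ(i; S) = λ_i / Λ(S)` with `Λ(S) = ∑_{k ∈ max S} λ_k`. Writing
`s(S) · λ_i / Λ(S) = (s(S) / |max S|) · (λ_i |max S| / Λ(S))` then factors the unnormalized weight as
`scfW λ π = F(π) · pasvW λ π` with `F(π) = ∏_t s(S_t) / |max S_t|` independent of `λ`. For constant
`λ` the PASV weight is identically `1`, so uniformity forces `F` to be a nonzero constant on linear
extensions, and that constant cancels under normalization. -/

open Finset
open scoped Classical BigOperators

def Feasible {n : ℕ} (le : Fin n → Fin n → Prop) (S : Finset (Fin n)) : Prop :=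
  ∀ i ∈ S, ∀ j, le j i → j ∈ S

noncomputable def scfW {n : ℕ} (le : Fin n → Fin n → Prop)
    (s : Finset (Fin n) → ℝ) (c : (Fin n → ℝ) → Fin n → Finset (Fin n) → ℝ)
    (lam : Fin n → ℝ) (π : Equiv.Perm (Fin n)) : ℝ :=
  ∏ t : Fin n, s (prefixSet π (t.1 + 1)) * c lam (π t) (prefixSet π (t.1 + 1))

noncomputable def scfDist {n : ℕ} (le : Fin n → Fin n → Prop)
    (s : Finset (Fin n) → ℝ) (c : (Fin n → ℝ) → Fin n → Finset (Fin n) → ℝ)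
    (lam : Fin n → ℝ) (π : Equiv.Perm (Fin n)) : ℝ :=
  if IsLinExt le π then
    scfW le s c lam π /
      ∑ σ ∈ Finset.univ.filter (fun σ => IsLinExt le σ), scfW le s c lam σ
  else 0

theorem eq_div_sum_of_sum_eq_one_of_div_eq_div {ι : Type*} {M : Finset ι} {w lam : ι → ℝ}
    (hsum : ∑ k ∈ M, w k = 1) (hratio : ∀ i ∈ M, ∀ j ∈ M, w i / w j = lam i / lam j)
    (hlam : ∀ k ∈ M, lam k ≠ 0) {i : ι} (hi : i ∈ M) :
    w i = lam i / ∑ k ∈ M, lam k := by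
  -- `w i / w i = lam i / lam i = 1` rules out `w i = 0`.
  have hwi : w i ≠ 0 := by
    intro h
    simpa [h, div_self (hlam i hi)] using hratio i hi i hi
  have hw : ∀ k ∈ M, w k = lam k * (w i / lam i) := fun k hk => by
    rw [← mul_div_assoc, eq_div_iff (hlam i hi), ← div_eq_div_iff hwi (hlam i hi)]
    exact hratio k hk i hi
  rw [sum_congr rfl hw, ← sum_mul] at hsum
  have hwi_eq := eq_one_div_of_mul_eq_one_right hsum
  rw [div_eq_iff (hlam i hi)] at hwi_eq
  rw [hwi_eq]
  ring

section LinearExtension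

variable {n : ℕ} {le : Fin n → Fin n → Prop} {π : Equiv.Perm (Fin n)}

theorem IsLinExt.feasible_prefixSet (hπ : IsLinExt le π) (t : ℕ) :
    Feasible le (prefixSet π t) := by
  intro i hi j hji
  simp only [prefixSet, mem_filter, mem_univ, true_and] at hi ⊢
  by_cases h : j = i
  · exact h ▸ hi
  · exact (hπ j i hji h).trans hi

theorem IsLinExt.apply_mem_maxSet (hπ : IsLinExt le π) (t : Fin n) :
    π t ∈ maxSet le (prefixSet π (t.1 + 1)) := by
  simp only [maxSet, prefixSet, mem_filter, mem_univ, true_and, Equiv.symm_apply_apply]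
  refine ⟨Nat.lt_succ_self _, fun j hj hle' => ?_⟩
  by_contra hne
  have := hπ (π t) j hle' hne
  simp only [Equiv.symm_apply_apply] at this
  omega

theorem IsLinExt.card_maxSet_ne_zero (hπ : IsLinExt le π) (t : Fin n) :
    ((maxSet le (prefixSet π (t.1 + 1))).card : ℝ) ≠ 0 :=
  Nat.cast_ne_zero.mpr (card_ne_zero_of_mem (hπ.apply_mem_maxSet t))

theorem pasvW_one (hπ : IsLinExt le π) : pasvW le (fun _ => 1) π = 1 := by
  refine prod_eq_one fun t _ => ?_
  rw [sum_const, nsmul_one, one_mul, div_self (hπ.card_maxSet_ne_zero t)]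

theorem scfW_eq_mul_pasvW {s : Finset (Fin n) → ℝ} {c : (Fin n → ℝ) → Fin n → Finset (Fin n) → ℝ}
    {μ : Fin n → ℝ}
    (hc : ∀ S, Feasible le S → S.Nonempty → ∀ i ∈ maxSet le S,
      c μ i S = μ i / ∑ k ∈ maxSet le S, μ k)
    (hπ : IsLinExt le π) :
    scfW le s c μ π =
      (∏ t : Fin n, s (prefixSet π (t.1 + 1)) / (maxSet le (prefixSet π (t.1 + 1))).card) *
        pasvW le μ π := by
  rw [scfW, pasvW, ← prod_mul_distrib]
  refine prod_congr rfl fun t _ => ?_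
  have hmem := hπ.apply_mem_maxSet t
  rw [hc _ (hπ.feasible_prefixSet _) ⟨π t, (mem_filter.mp hmem).1⟩ _ hmem]
  field_simp [hπ.card_maxSet_ne_zero t]

end LinearExtension

section Normalization

variable {n : ℕ} {le : Fin n → Fin n → Prop} {s : Finset (Fin n) → ℝ}
  {c : (Fin n → ℝ) → Fin n → Finset (Fin n) → ℝ} {μ : Fin n → ℝ}

theorem exists_scfW_eq_const_of_uniform
    (hu : ∀ π, IsLinExt le π →
      scfDist le s c μ π = 1 / (univ.filter fun σ => IsLinExt le σ).card) :
    ∃ C ≠ 0, ∀ σ, IsLinExt le σ → scfW le s c μ σ = C := by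
  set L := univ.filter fun σ : Equiv.Perm (Fin n) => IsLinExt le σ
  rcases L.eq_empty_or_nonempty with hL | ⟨σ₀, hσ₀⟩
  · refine ⟨1, one_ne_zero, fun σ hσ => ?_⟩
    have hσL : σ ∈ L := mem_filter.mpr ⟨mem_univ σ, hσ⟩
    simp [hL] at hσL
  have hN : (L.card : ℝ) ≠ 0 := Nat.cast_ne_zero.mpr (card_ne_zero_of_mem hσ₀)
  have hdist : ∀ σ, IsLinExt le σ → scfW le s c μ σ / ∑ τ ∈ L, scfW le s c μ τ = 1 / L.card :=
    fun σ hσ => by simpa only [scfDist, if_pos hσ] using hu σ hσ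
  have hZ : ∑ τ ∈ L, scfW le s c μ τ ≠ 0 := by
    intro h
    have h₀ := hdist σ₀ (mem_filter.mp hσ₀).2
    rw [h, div_zero] at h₀
    exact one_div_ne_zero hN h₀.symm
  refine ⟨(∑ τ ∈ L, scfW le s c μ τ) / L.card, div_ne_zero hZ hN, fun σ hσ => ?_⟩
  have := hdist σ hσ
  rw [div_eq_div_iff hZ hN] at this
  rw [eq_div_iff hN]
  linarith

theorem scfDist_eq_pasvDist_of_scfW_eq_const_mul {C : ℝ} (hC : C ≠ 0)
    (h : ∀ σ, IsLinExt le σ → scfW le s c μ σ = C * pasvW le μ σ) (π : Equiv.Perm (Fin n)) :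
    scfDist le s c μ π = pasvDist le μ π := by
  unfold scfDist pasvDist
  split_ifs with hπ
  · rw [sum_congr rfl fun σ hσ => h σ (mem_filter.mp hσ).2, ← mul_sum, h π hπ,
      mul_div_mul_left _ _ hC]
  · rfl

end Normalization

theorem stmt15_general {n : ℕ} (le : Fin n → Fin n → Prop)
    (s : Finset (Fin n) → ℝ)
    (c : (Fin n → ℝ) → Fin n → Finset (Fin n) → ℝ)
    (hnorm : ∀ lam : Fin n → ℝ, (∀ j, 0 < lam j) →
        ∀ S, Feasible le S → S.Nonempty → ∑ i ∈ maxSet le S, c lam i S = 1)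
    (hWP : ∀ lam : Fin n → ℝ, (∀ j, 0 < lam j) →
        ∀ S, Feasible le S → ∀ i ∈ maxSet le S, ∀ j ∈ maxSet le S,
          c lam i S / c lam j S = lam i / lam j) :
    (∀ lam : Fin n → ℝ, (∀ j, 0 < lam j) →
        ∀ S, Feasible le S → S.Nonempty → ∀ i ∈ maxSet le S,
          c lam i S = lam i / ∑ k ∈ maxSet le S, lam k) ∧
    ((∀ k : ℝ, 0 < k → ∀ π : Equiv.Perm (Fin n), IsLinExt le π →
          scfDist le s c (fun _ => k) π =
            1 / (Finset.univ.filter (fun σ => IsLinExt le σ)).card) →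
      ∀ lam : Fin n → ℝ, (∀ j, 0 < lam j) → ∀ π : Equiv.Perm (Fin n),
        scfDist le s c lam π = pasvDist le lam π) := by
  have hchoice : ∀ lam : Fin n → ℝ, (∀ j, 0 < lam j) →
      ∀ S, Feasible le S → S.Nonempty → ∀ i ∈ maxSet le S,
        c lam i S = lam i / ∑ k ∈ maxSet le S, lam k :=
    fun lam hlam S hS hne _ hi => eq_div_sum_of_sum_eq_one_of_div_eq_div (hnorm lam hlam S hS hne)
      (hWP lam hlam S hS) (fun k _ => (hlam k).ne') hi
  refine ⟨hchoice, fun hunif lam hlam => ?_⟩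
  obtain ⟨C, hC, hconst⟩ := exists_scfW_eq_const_of_uniform (hunif 1 one_pos)
  refine scfDist_eq_pasvDist_of_scfW_eq_const_mul hC fun σ hσ => ?_
  have hone := scfW_eq_mul_pasvW (s := s) (hchoice (fun _ => 1) fun _ => one_pos) hσ
  rw [pasvW_one hσ, mul_one, hconst σ hσ] at hone
  rw [scfW_eq_mul_pasvW (hchoice lam hlam) hσ, ← hone]

theorem stmt15 {n : ℕ} (le : Fin n → Fin n → Prop) (hle : IsPartialOrder (Fin n) le)
    (s : Finset (Fin n) → ℝ) (hs : ∀ S, 0 < s S)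
    (c : (Fin n → ℝ) → Fin n → Finset (Fin n) → ℝ)
    (hcpos : ∀ lam : Fin n → ℝ, (∀ j, 0 < lam j) →
        ∀ S, Feasible le S → ∀ i ∈ maxSet le S, 0 < c lam i S)
    (hnorm : ∀ lam : Fin n → ℝ, (∀ j, 0 < lam j) →
        ∀ S, Feasible le S → S.Nonempty → ∑ i ∈ maxSet le S, c lam i S = 1)
    (hWP : ∀ lam : Fin n → ℝ, (∀ j, 0 < lam j) →
        ∀ S, Feasible le S → ∀ i ∈ maxSet le S, ∀ j ∈ maxSet le S,
          c lam i S / c lam j S = lam i / lam j) :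
    (∀ lam : Fin n → ℝ, (∀ j, 0 < lam j) →
        ∀ S, Feasible le S → S.Nonempty → ∀ i ∈ maxSet le S,
          c lam i S = lam i / ∑ k ∈ maxSet le S, lam k) ∧
    ((∀ k : ℝ, 0 < k → ∀ π : Equiv.Perm (Fin n), IsLinExt le π →
          scfDist le s c (fun _ => k) π =
            1 / (Finset.univ.filter (fun σ => IsLinExt le σ)).card) →
      ∀ lam : Fin n → ℝ, (∀ j, 0 < lam j) → ∀ π : Equiv.Perm (Fin n),
        scfDist le s c lam π = pasvDist le lam π) :=
  stmt15_general le s c hnorm hWP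
end

section
/- Symmetry of the precedence Shapley value: let p be the uniform distribution on linear extensions of ([n],⪯), and suppose players i and j are symmetric both in the game (U(S ∪ {i}) = U(S ∪ {j}) for all S ⊆ [n]\{i,j}) and in the poset (the map swapping i and j is an automorphism of ⪯). Then the random order values satisfy ψ_i(U) = ψ_j(U). -/
open Finset
open scoped Classical BigOperators

/-! Since `swap i j` is an automorphism of `⪯`, left multiplication by it permutes the linear
extensions, so it preserves the uniform weight; it also carries the predecessors of `i` in `π` to the predecessors of `j`
in `swap i j * π`. Game symmetry makes the two marginal contributions equal, so reindexing the
sum defining `ψ_j` by `π ↦ swap i j * π` turns it into the sum defining `ψ_i`. -/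

@[simp]
theorem Equiv.Perm.mul_symm_apply {α : Type*} (σ π : Equiv.Perm α) (a : α) :
    (σ * π).symm a = π.symm (σ.symm a) := by
  simp [Equiv.Perm.mul_def]

section

variable {α : Type*} [DecidableEq α]

theorem Finset.image_swap_of_notMem {i j : α} {T : Finset α} (hi : i ∉ T) (hj : j ∉ T) :
    T.image (Equiv.swap i j) = T :=
  (image_congr fun _ hx => Equiv.swap_apply_of_ne_of_ne (ne_of_mem_of_not_mem hx hi)
    (ne_of_mem_of_not_mem hx hj)).trans image_id

lemma marginal_image_swap {U : Finset α → ℝ} {i j : α}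
    (hgame : ∀ S : Finset α, i ∉ S → j ∉ S → U (insert i S) = U (insert j S))
    {S : Finset α} (hi : i ∉ S) :
    U (insert j (S.image (Equiv.swap i j))) - U (S.image (Equiv.swap i j)) =
      U (insert i S) - U S := by
  by_cases hj : j ∈ S
  · obtain ⟨T, hjT, rfl⟩ : ∃ T, j ∉ T ∧ S = insert j T :=
      ⟨S.erase j, notMem_erase j S, (insert_erase hj).symm⟩
    have hiT : i ∉ T := fun h => hi (mem_insert_of_mem h)
    rw [image_insert, Equiv.swap_apply_right, image_swap_of_notMem hiT hjT, insert_comm,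
      hgame T hiT hjT]
  · rw [image_swap_of_notMem hi hj, hgame S hi hj]

end

section

variable {n : ℕ}

lemma isLinExt_mul_iff {le : Fin n → Fin n → Prop} {σ : Equiv.Perm (Fin n)}
    (hσ : ∀ a b, le a b ↔ le (σ a) (σ b)) (π : Equiv.Perm (Fin n)) :
    IsLinExt le (σ * π) ↔ IsLinExt le π := by
  constructor
  · intro h a b hab hne
    simpa using h (σ a) (σ b) ((hσ a b).mp hab) (σ.injective.ne hne)
  · intro h a b hab hne
    have hab' : le (σ.symm a) (σ.symm b) := (hσ _ _).mpr (by simpa using hab)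
    simpa using h _ _ hab' (σ.symm.injective.ne hne)

lemma before_mul_apply (σ π : Equiv.Perm (Fin n)) (i : Fin n) :
    before (σ * π) (σ i) = (before π i).image σ := by
  ext k
  obtain ⟨a, rfl⟩ := σ.surjective k
  simp [before]

lemma rov_eq_of_mul_left_invariant {p : Equiv.Perm (Fin n) → ℝ} {U : Finset (Fin n) → ℝ}
    {σ : Equiv.Perm (Fin n)} {i j : Fin n} (hσ : σ i = j) (hp : ∀ π, p (σ * π) = p π)
    (hU : ∀ S, i ∉ S → U (insert j (S.image σ)) - U (S.image σ) = U (insert i S) - U S) :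
    rov p U i = rov p U j := by
  subst hσ
  refine Fintype.sum_equiv (Equiv.mulLeft σ) _ _ fun π => ?_
  have hi : i ∉ before π i := by simp [before]
  simp only [Equiv.coe_mulLeft, hp, before_mul_apply, hU _ hi]

end

theorem stmt19_general {n : ℕ} (le : Fin n → Fin n → Prop)
    (U : Finset (Fin n) → ℝ) (i j : Fin n)
    (hgame : ∀ S : Finset (Fin n), i ∉ S → j ∉ S → U (insert i S) = U (insert j S))
    (hauto : ∀ a b : Fin n, le a b ↔ le (Equiv.swap i j a) (Equiv.swap i j b)) :
    rov (fun π => if IsLinExt le π then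
          (1 : ℝ) / (Finset.univ.filter (fun σ => IsLinExt le σ)).card else 0) U i =
      rov (fun π => if IsLinExt le π then
          (1 : ℝ) / (Finset.univ.filter (fun σ => IsLinExt le σ)).card else 0) U j := by
  refine rov_eq_of_mul_left_invariant (Equiv.swap_apply_left i j) (fun π => ?_)
    (fun S hi => marginal_image_swap hgame hi)
  simp only [isLinExt_mul_iff hauto]

theorem stmt19 {n : ℕ} (le : Fin n → Fin n → Prop) (hle : IsPartialOrder (Fin n) le)
    (U : Finset (Fin n) → ℝ) (i j : Fin n)
    (hgame : ∀ S : Finset (Fin n), i ∉ S → j ∉ S → U (insert i S) = U (insert j S))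
    (hauto : ∀ a b : Fin n, le a b ↔ le (Equiv.swap i j a) (Equiv.swap i j b)) :
    rov (fun π => if IsLinExt le π then
          (1 : ℝ) / (Finset.univ.filter (fun σ => IsLinExt le σ)).card else 0) U i =
      rov (fun π => if IsLinExt le π then
          (1 : ℝ) / (Finset.univ.filter (fun σ => IsLinExt le σ)).card else 0) U j :=
  stmt19_general le U i j hgame hauto
end
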